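/- arXiv:2109.03192 — 7 statements merged into one kernel-verified Lean document; each statement's English description precedes it below -/
import Mathlib

section
/- Let (α, 𝒜, m) be a measure space and 1 ≤ p ≤ 2. Let D be a linear subspace of the space of bounded measurable functions α → ℝ such that every f ∈ D satisfies ∫ |f|^p dm < ∞. Let Γ : D × D → (measurable functions α → ℝ) be symmetric and ℝ-bilinear, with Γ(f, f) ≥ 0 m-a.e. and ∫ Γ(f, f) dm < ∞ for every f ∈ D. Assume the chain rule: for all φ, ψ : ℝ → ℝ that are smooth and bounded with all derivatives bounded and φ(0) = ψ(0) = 0, and for all f, g ∈ D, one has φ∘f ∈ D, ψ∘g ∈ D, and Γ(φ∘f, ψ∘g) = (φ′∘f)·(ψ′∘g)·Γ(f, g) m-a.e. Assume L²-closability: for every sequence (g_n) in D with ∫ Γ(g_n − g_m, g_n − g_m) dm → 0 as n, m → ∞ and ∫ |g_n|² dm → 0, one has ∫ Γ(g_n, g_n) dm → 0. Then closability also holds in L^p: for every sequence (f_n) in D with ∫ Γ(f_n − f_m, f_n − f_m) dm → 0 as n, m → ∞ and ∫ |f_n|^p dm → 0, one has ∫ Γ(f_n, f_n) dm → 0. 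-/
/-!
Truncate by `sin`: put `g n = sin ∘ f n`. As `sin t ^ 2 ≤ |t| ^ p` for `0 ≤ p ≤ 2`,
`g n → 0` in `L²`. By the chain rule and positivity of `Γ`,
`Γ(g n - g k) ≤ 2 Γ(f n - f k) + 4 |cos f n - cos f k| Γ(f k)`, and the weights
`|cos f n - cos f k| ≤ min 2 |f n - f k|` are bounded and tend to `0` in measure (Chebyshev).
Against such weights the energies of a `Γ`-Cauchy sequence are uniformly small, because
`Γ(f n) ≤ 2 Γ(f n - f K) + 2 Γ(f K)` reduces them to the single integrable function `Γ(f K)`.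
So `(g n)` is `Γ`-Cauchy, `L²`-closability gives `∫ Γ(g n) → 0`, and
`Γ(f n) = Γ(g n) + sin² (f n) Γ(f n)` concludes, the last term being again a weighted energy.
-/

open MeasureTheory Filter Topology
open scoped ENNReal

theorem ENNReal.tendsto_nhds_zero_of_forall_le_add_mul {ι : Type*} {l : Filter ι} {x : ι → ℝ≥0∞}
    {C : ℝ≥0∞} (hC : C ≠ ∞)
    (h : ∀ δ : ℝ≥0∞, 0 < δ →
      ∃ a : ι → ℝ≥0∞, Tendsto a l (𝓝 0) ∧ ∀ᶠ i in l, x i ≤ a i + C * δ) :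
    Tendsto x l (𝓝 0) := by
  rw [ENNReal.tendsto_nhds_zero]
  intro ε hε
  have hε2 : 0 < ε / 2 := ENNReal.half_pos hε.ne'
  obtain ⟨a, ha, hxa⟩ := h (ε / 2 / C) (ENNReal.div_pos hε2.ne' hC)
  filter_upwards [hxa, ENNReal.tendsto_nhds_zero.1 ha _ hε2] with i hxi hai
  calc x i ≤ a i + C * (ε / 2 / C) := hxi
    _ ≤ ε / 2 + ε / 2 := add_le_add hai ENNReal.mul_div_le
    _ = ε := ENNReal.add_halves ε

namespace MeasureTheory

variable {α ι : Type*} [MeasurableSpace α] {m : Measure α} {l : Filter ι}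

theorem tendstoInMeasure_of_tendsto_lintegral_rpow {f : ι → α → ℝ}
    (hf : ∀ i, Measurable (f i)) {p : ℝ} (hp : 0 ≤ p)
    (hlim : Tendsto (fun i => ∫⁻ x, ENNReal.ofReal (|f i x| ^ p) ∂m) l (𝓝 0)) :
    TendstoInMeasure m f l 0 := by
  rw [tendstoInMeasure_iff_enorm]
  intro ε hε hε_top
  have hεp : ε ^ p ≠ 0 := (ENNReal.rpow_pos hε hε_top).ne'
  have hcheb : ∀ i, m {x | ε ≤ ‖f i x - 0‖ₑ}
      ≤ (ε ^ p)⁻¹ * ∫⁻ x, ENNReal.ofReal (|f i x| ^ p) ∂m := fun i => by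
    calc m {x | ε ≤ ‖f i x - 0‖ₑ} ≤ m {x | ε ^ p ≤ ENNReal.ofReal (|f i x| ^ p)} := by
          refine measure_mono fun x hx => ?_
          simp only [Set.mem_ofPred_eq, sub_zero, Real.enorm_eq_ofReal_abs] at hx ⊢
          rw [← ENNReal.ofReal_rpow_of_nonneg (abs_nonneg _) hp]
          exact ENNReal.rpow_le_rpow hx hp
      _ ≤ (∫⁻ x, ENNReal.ofReal (|f i x| ^ p) ∂m) / ε ^ p :=
          meas_ge_le_lintegral_div (by fun_prop) hεp (ENNReal.rpow_ne_top_of_nonneg hp hε_top)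
      _ = _ := by rw [div_eq_mul_inv, mul_comm]
  have hlim' := ENNReal.Tendsto.const_mul hlim (Or.inr (ENNReal.inv_ne_top.2 hεp))
  rw [mul_zero] at hlim'
  exact tendsto_of_tendsto_of_tendsto_of_le_of_le tendsto_const_nhds hlim' (fun _ => zero_le)
    hcheb

theorem TendstoInMeasure.sub {E : Type*} [SeminormedAddCommGroup E]
    {f g : ι → α → E} {F G : α → E} (hf : TendstoInMeasure m f l F)
    (hg : TendstoInMeasure m g l G) :
    TendstoInMeasure m (f - g) l (F - G) := by
  rw [tendstoInMeasure_iff_enorm] at *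
  intro ε hε hε_top
  have hε2 : 0 < ε / 2 := ENNReal.half_pos hε.ne'
  have hsplit : ∀ i, m {x | ε ≤ ‖(f - g) i x - (F - G) x‖ₑ}
      ≤ m {x | ε / 2 ≤ ‖f i x - F x‖ₑ} + m {x | ε / 2 ≤ ‖g i x - G x‖ₑ} := fun i => by
    refine (measure_mono fun x hx => ?_).trans (measure_union_le _ _)
    by_contra hnot
    simp only [Set.mem_union, Set.mem_ofPred_eq, not_or, not_le] at hnot hx
    have htri : ‖f i x - g i x - (F x - G x)‖ₑ ≤ ‖f i x - F x‖ₑ + ‖g i x - G x‖ₑ := by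
      rw [sub_sub_sub_comm]; exact enorm_sub_le
    exact (hx.trans htri).not_gt
      ((ENNReal.add_lt_add hnot.1 hnot.2).trans_eq (ENNReal.add_halves ε))
  have hsum := (hf _ hε2 (ENNReal.div_ne_top hε_top two_ne_zero)).add
    (hg _ hε2 (ENNReal.div_ne_top hε_top two_ne_zero))
  rw [add_zero] at hsum
  exact tendsto_of_tendsto_of_tendsto_of_le_of_le tendsto_const_nhds hsum (fun _ => zero_le)
    hsplit

theorem TendstoInMeasure.sub_fst_snd {κ : Type*} [Preorder κ] {f : κ → α → ℝ}
    (hf : TendstoInMeasure m f atTop 0) :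
    TendstoInMeasure m (fun ij : κ × κ => f ij.1 - f ij.2) atTop 0 := by
  have h := (hf.comp (tendsto_fst.mono_left prod_atTop_atTop_eq.ge)).sub (F := 0) (G := 0)
    (hf.comp (tendsto_snd.mono_left prod_atTop_atTop_eq.ge))
  rw [sub_zero] at h
  exact h

theorem tendstoInMeasure_zero_of_norm_le {E F : Type*} [SeminormedAddCommGroup E]
    [SeminormedAddCommGroup F] {f : ι → α → E} {g : ι → α → F}
    (hg : TendstoInMeasure m g l 0) (hfg : ∀ i x, ‖f i x‖ ≤ ‖g i x‖) :
    TendstoInMeasure m f l 0 := fun ε hε =>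
  tendsto_of_tendsto_of_tendsto_of_le_of_le tendsto_const_nhds (hg ε hε) (fun _ => zero_le)
    fun i => measure_mono fun x hx => by
      simp only [Set.mem_ofPred_eq, Pi.zero_apply, edist_zero_right] at hx ⊢
      exact hx.trans (enorm_le_iff_norm_le.2 (hfg i x))

theorem tendsto_lintegral_enorm_mul_of_tendstoInMeasure {w : ι → α → ℝ} {M : ℝ}
    (hwM : ∀ i x, ‖w i x‖ ≤ M) (hw : TendstoInMeasure m w l 0) {G : α → ℝ≥0∞}
    (hG : Measurable G) (hG_fin : ∫⁻ x, G x ∂m ≠ ∞) :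
    Tendsto (fun i => ∫⁻ x, ‖w i x‖ₑ * G x ∂m) l (𝓝 0) := by
  refine ENNReal.tendsto_nhds_zero_of_forall_le_add_mul hG_fin fun δ hδ => ?_
  set A : ι → Set α := fun i => {x | δ ≤ ‖w i x‖ₑ}
  have hA : Tendsto (fun i => ∫⁻ x in A i, G x ∂m) l (𝓝 0) := by
    refine tendsto_setLIntegral_zero hG_fin ?_
    simpa only [Function.comp_def, A, Pi.zero_apply, edist_zero_right] using hw δ hδ
  have hlim := ENNReal.Tendsto.const_mul hA (Or.inr (ENNReal.ofReal_ne_top (r := M)))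
  rw [mul_zero] at hlim
  refine ⟨_, hlim, Eventually.of_forall fun i => ?_⟩
  have hpt : ∀ x, ‖w i x‖ₑ * G x
      ≤ (A i).indicator (fun x => ENNReal.ofReal M * G x) x + δ * G x := fun x => by
    by_cases hx : x ∈ A i
    · rw [Set.indicator_of_mem hx]
      refine le_add_right (mul_le_mul_left ?_ _)
      rw [← ofReal_norm]
      exact ENNReal.ofReal_le_ofReal (hwM i x)
    · rw [Set.indicator_of_notMem hx, zero_add]
      exact mul_le_mul_left (not_le.1 hx).le _
  calc ∫⁻ x, ‖w i x‖ₑ * G x ∂m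
      ≤ ∫⁻ x, ((A i).indicator (fun x => ENNReal.ofReal M * G x) x + δ * G x) ∂m :=
        lintegral_mono hpt
    _ = ∫⁻ x, (A i).indicator (fun x => ENNReal.ofReal M * G x) x ∂m + δ * ∫⁻ x, G x ∂m := by
        rw [lintegral_add_right' _ (hG.const_mul δ).aemeasurable, lintegral_const_mul δ hG]
    _ ≤ ENNReal.ofReal M * ∫⁻ x in A i, G x ∂m + (∫⁻ x, G x ∂m) * δ := by
        rw [mul_comm δ, ← lintegral_const_mul' _ _ ENNReal.ofReal_ne_top]
        exact add_le_add_left (lintegral_indicator_le _ _) _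

end MeasureTheory

theorem quadForm_nonneg_of_rat {a b c : ℝ}
    (h : ∀ q r : ℚ, 0 ≤ (q : ℝ) ^ 2 * a + 2 * (q * r) * b + (r : ℝ) ^ 2 * c) (s t : ℝ) :
    0 ≤ s ^ 2 * a + 2 * (s * t) * b + t ^ 2 * c :=
  (Rat.denseRange_cast.prodMap Rat.denseRange_cast).induction_on
    (p := fun st : ℝ × ℝ => 0 ≤ st.1 ^ 2 * a + 2 * (st.1 * st.2) * b + st.2 ^ 2 * c) (s, t)
    (isClosed_le continuous_const (by fun_prop)) fun qr => h qr.1 qr.2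

/-- For the form `Q u v = u² a + 2 u v b + v² c`: write `(s, -t) = X + Y` with
`X = s • (1, -1)` and `Y = (s - t) • (0, 1)`, and use `Q (X + Y) ≤ 2 Q X + 2 Q Y`. -/
theorem quadForm_sub_le {a b c : ℝ}
    (hQ : ∀ u v : ℝ, 0 ≤ u ^ 2 * a + 2 * (u * v) * b + v ^ 2 * c) {s t : ℝ} (hs : |s| ≤ 1)
    (ht : |t| ≤ 1) :
    s ^ 2 * a - 2 * (s * t) * b + t ^ 2 * c ≤ 2 * (a - 2 * b + c) + 4 * |s - t| * c := by
  have hdiag : 0 ≤ a - 2 * b + c := by linarith [hQ 1 (-1)]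
  have hc : 0 ≤ c := by linarith [hQ 0 1]
  have hs2 : s ^ 2 ≤ 1 := by nlinarith [abs_nonneg s, sq_abs s]
  have hst : (s - t) ^ 2 ≤ 2 * |s - t| := by
    nlinarith [abs_nonneg (s - t), sq_abs (s - t), abs_sub s t]
  nlinarith [hQ s (t - 2 * s), mul_nonneg (sub_nonneg.2 hs2) hdiag,
    mul_le_mul_of_nonneg_right hst hc]

def IsEnergyCauchy {α : Type*} [MeasurableSpace α] (m : Measure α)
    (Γ : (α → ℝ) → (α → ℝ) → α → ℝ) (f : ℕ → α → ℝ) : Prop :=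
  Tendsto (fun nm : ℕ × ℕ => ∫⁻ x, ENNReal.ofReal (Γ (f nm.1 - f nm.2) (f nm.1 - f nm.2) x) ∂m)
    atTop (𝓝 0)

structure IsSquareField {α : Type*} [MeasurableSpace α] (m : Measure α) (D : Set (α → ℝ))
    (Γ : (α → ℝ) → (α → ℝ) → α → ℝ) : Prop where
  add_mem : ∀ f ∈ D, ∀ g ∈ D, f + g ∈ D
  smul_mem : ∀ (c : ℝ), ∀ f ∈ D, c • f ∈ D
  symm : ∀ f ∈ D, ∀ g ∈ D, Γ f g = Γ g f
  add_left : ∀ f ∈ D, ∀ g ∈ D, ∀ h ∈ D, Γ (f + g) h = Γ f h + Γ g h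
  smul_left : ∀ (c : ℝ), ∀ f ∈ D, ∀ g ∈ D, Γ (c • f) g = c • Γ f g
  ae_nonneg : ∀ f ∈ D, ∀ᵐ x ∂m, 0 ≤ Γ f f x

namespace IsSquareField

variable {α ι : Type*} [MeasurableSpace α] {m : Measure α} {D : Set (α → ℝ)}
  {Γ : (α → ℝ) → (α → ℝ) → α → ℝ} {u v : α → ℝ} {f : ℕ → α → ℝ}

theorem sub_mem (hΓ : IsSquareField m D Γ) (hu : u ∈ D) (hv : v ∈ D) : u - v ∈ D := by
  simpa [sub_eq_add_neg] using hΓ.add_mem u hu _ (hΓ.smul_mem (-1) v hv)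

theorem apply_smul_add_smul (hΓ : IsSquareField m D Γ) (hu : u ∈ D) (hv : v ∈ D) (c d : ℝ)
    (x : α) : Γ (c • u + d • v) (c • u + d • v) x
      = c ^ 2 * Γ u u x + 2 * (c * d) * Γ u v x + d ^ 2 * Γ v v x := by
  have hcu := hΓ.smul_mem c u hu
  have hdv := hΓ.smul_mem d v hv
  have hw := hΓ.add_mem _ hcu _ hdv
  have hΓw : ∀ z ∈ D, Γ (c • u + d • v) z x = c * Γ u z x + d * Γ v z x := fun z hz => by
    simp [hΓ.add_left _ hcu _ hdv z hz, hΓ.smul_left c u hu z hz, hΓ.smul_left d v hv z hz]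
  rw [hΓw _ hw, hΓ.symm u hu _ hw, hΓ.symm v hv _ hw, hΓw u hu, hΓw v hv, hΓ.symm v hv u hu]
  ring

theorem apply_sub_sub (hΓ : IsSquareField m D Γ) (hu : u ∈ D) (hv : v ∈ D) (x : α) :
    Γ (u - v) (u - v) x = Γ u u x - 2 * Γ u v x + Γ v v x := by
  have h := hΓ.apply_smul_add_smul hu hv 1 (-1) x
  rw [one_smul, neg_one_smul, ← sub_eq_add_neg] at h
  rw [h]; ring

theorem ae_quadForm_nonneg (hΓ : IsSquareField m D Γ) (hu : u ∈ D) (hv : v ∈ D) :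
    ∀ᵐ x ∂m, ∀ s t : ℝ, 0 ≤ s ^ 2 * Γ u u x + 2 * (s * t) * Γ u v x + t ^ 2 * Γ v v x := by
  have hrat : ∀ᵐ x ∂m, ∀ q r : ℚ,
      0 ≤ (q : ℝ) ^ 2 * Γ u u x + 2 * (q * r) * Γ u v x + (r : ℝ) ^ 2 * Γ v v x := by
    simp only [ae_all_iff]
    intro q r
    filter_upwards [hΓ.ae_nonneg _ (hΓ.add_mem _ (hΓ.smul_mem q u hu) _ (hΓ.smul_mem r v hv))]
      with x hx
    rwa [hΓ.apply_smul_add_smul hu hv] at hx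
  filter_upwards [hrat] with x hx
  exact quadForm_nonneg_of_rat hx

theorem ae_apply_add_le (hΓ : IsSquareField m D Γ) (hu : u ∈ D) (hv : v ∈ D) :
    ∀ᵐ x ∂m, ENNReal.ofReal (Γ (u + v) (u + v) x)
      ≤ 2 * ENNReal.ofReal (Γ u u x) + 2 * ENNReal.ofReal (Γ v v x) := by
  filter_upwards [hΓ.ae_quadForm_nonneg hu hv] with x hQ
  have h := hΓ.apply_smul_add_smul hu hv 1 1 x
  rw [one_smul, one_smul] at h
  have hle : Γ (u + v) (u + v) x ≤ 2 * Γ u u x + 2 * Γ v v x := by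
    nlinarith [hQ 1 (-1)]
  calc ENNReal.ofReal (Γ (u + v) (u + v) x) ≤ ENNReal.ofReal (2 * Γ u u x + 2 * Γ v v x) :=
        ENNReal.ofReal_le_ofReal hle
    _ ≤ ENNReal.ofReal (2 * Γ u u x) + ENNReal.ofReal (2 * Γ v v x) := ENNReal.ofReal_add_le
    _ = 2 * ENNReal.ofReal (Γ u u x) + 2 * ENNReal.ofReal (Γ v v x) := by
        simp [ENNReal.ofReal_mul]

theorem ae_apply_sub_le_of_chainRule (hΓ : IsSquareField m D Γ) {u' v' a b : α → ℝ}
    (hu : u ∈ D) (hv : v ∈ D) (hu' : u' ∈ D) (hv' : v' ∈ D)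
    (ha : ∀ x, |a x| ≤ 1) (hb : ∀ x, |b x| ≤ 1)
    (huu : ∀ᵐ x ∂m, Γ u' u' x = a x * a x * Γ u u x)
    (huv : ∀ᵐ x ∂m, Γ u' v' x = a x * b x * Γ u v x)
    (hvv : ∀ᵐ x ∂m, Γ v' v' x = b x * b x * Γ v v x) :
    ∀ᵐ x ∂m, ENNReal.ofReal (Γ (u' - v') (u' - v') x)
      ≤ 2 * ENNReal.ofReal (Γ (u - v) (u - v) x)
        + 4 * (‖a x - b x‖ₑ * ENNReal.ofReal (Γ v v x)) := by
  filter_upwards [hΓ.ae_quadForm_nonneg hu hv, huu, huv, hvv] with x hQ h1 h2 h3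
  have hle : Γ (u' - v') (u' - v') x
      ≤ 2 * Γ (u - v) (u - v) x + 4 * |a x - b x| * Γ v v x := by
    rw [hΓ.apply_sub_sub hu' hv', hΓ.apply_sub_sub hu hv, h1, h2, h3]
    linarith [quadForm_sub_le hQ (ha x) (hb x)]
  calc ENNReal.ofReal (Γ (u' - v') (u' - v') x)
      ≤ ENNReal.ofReal (2 * Γ (u - v) (u - v) x)
        + ENNReal.ofReal (4 * |a x - b x| * Γ v v x) :=
        (ENNReal.ofReal_le_ofReal hle).trans ENNReal.ofReal_add_le
    _ = _ := by
        rw [ENNReal.ofReal_mul (by positivity), ENNReal.ofReal_mul (by positivity),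
          ENNReal.ofReal_mul (by positivity), Real.enorm_eq_ofReal_abs]
        simp [mul_assoc]

theorem tendsto_lintegral_enorm_mul_of_isEnergyCauchy (hΓ : IsSquareField m D Γ)
    (hΓ_meas : ∀ u ∈ D, Measurable (Γ u u))
    (hΓ_int : ∀ u ∈ D, ∫⁻ x, ENNReal.ofReal (Γ u u x) ∂m < ∞)
    (hf : ∀ n, f n ∈ D) (hcauchy : IsEnergyCauchy m Γ f) {l : Filter ι} {w : ι → α → ℝ}
    {M : ℝ} (hwM : ∀ i x, ‖w i x‖ ≤ M) (hw : TendstoInMeasure m w l 0) {σ : ι → ℕ}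
    (hσ : Tendsto σ l atTop) :
    Tendsto (fun i => ∫⁻ x, ‖w i x‖ₑ * ENNReal.ofReal (Γ (f (σ i)) (f (σ i)) x) ∂m) l
      (𝓝 0) := by
  refine ENNReal.tendsto_nhds_zero_of_forall_le_add_mul (C := 2 * ENNReal.ofReal M) (by finiteness)
    fun δ hδ => ?_
  obtain ⟨K, hK⟩ := eventually_atTop_prod_self'.1 (ENNReal.tendsto_nhds_zero.1 hcauchy δ hδ)
  have hlim := ENNReal.Tendsto.const_mul (a := 2)
    (tendsto_lintegral_enorm_mul_of_tendstoInMeasure hwM hw (hΓ_meas _ (hf K)).ennreal_ofReal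
      (hΓ_int _ (hf K)).ne) (Or.inr ENNReal.ofNat_ne_top)
  rw [mul_zero] at hlim
  refine ⟨_, hlim, ?_⟩
  filter_upwards [hσ.eventually_ge_atTop K] with i hi
  have hdiff := hΓ.sub_mem (hf (σ i)) (hf K)
  have hpt : ∀ᵐ x ∂m, ‖w i x‖ₑ * ENNReal.ofReal (Γ (f (σ i)) (f (σ i)) x)
      ≤ 2 * ENNReal.ofReal M * ENNReal.ofReal (Γ (f (σ i) - f K) (f (σ i) - f K) x)
        + 2 * (‖w i x‖ₑ * ENNReal.ofReal (Γ (f K) (f K) x)) := by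
    filter_upwards [hΓ.ae_apply_add_le hdiff (hf K)] with x hx
    rw [sub_add_cancel] at hx
    have hwx : ‖w i x‖ₑ ≤ ENNReal.ofReal M := by
      rw [← ofReal_norm]; exact ENNReal.ofReal_le_ofReal (hwM i x)
    calc ‖w i x‖ₑ * ENNReal.ofReal (Γ (f (σ i)) (f (σ i)) x)
        ≤ ‖w i x‖ₑ * (2 * ENNReal.ofReal (Γ (f (σ i) - f K) (f (σ i) - f K) x)
          + 2 * ENNReal.ofReal (Γ (f K) (f K) x)) := by gcongr
      _ = 2 * ‖w i x‖ₑ * ENNReal.ofReal (Γ (f (σ i) - f K) (f (σ i) - f K) x)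
          + 2 * (‖w i x‖ₑ * ENNReal.ofReal (Γ (f K) (f K) x)) := by ring
      _ ≤ _ := by gcongr
  calc ∫⁻ x, ‖w i x‖ₑ * ENNReal.ofReal (Γ (f (σ i)) (f (σ i)) x) ∂m
      ≤ ∫⁻ x, (2 * ENNReal.ofReal M * ENNReal.ofReal (Γ (f (σ i) - f K) (f (σ i) - f K) x)
        + 2 * (‖w i x‖ₑ * ENNReal.ofReal (Γ (f K) (f K) x))) ∂m := lintegral_mono_ae hpt
    _ = 2 * ENNReal.ofReal M * ∫⁻ x, ENNReal.ofReal (Γ (f (σ i) - f K) (f (σ i) - f K) x) ∂m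
        + 2 * ∫⁻ x, ‖w i x‖ₑ * ENNReal.ofReal (Γ (f K) (f K) x) ∂m := by
        rw [lintegral_add_left ((hΓ_meas _ hdiff).ennreal_ofReal.const_mul _),
          lintegral_const_mul _ (hΓ_meas _ hdiff).ennreal_ofReal,
          lintegral_const_mul' _ _ (by simp)]
    _ ≤ _ := by rw [add_comm]; gcongr; exact hK _ hi K le_rfl

theorem isEnergyCauchy_of_chainRule (hΓ : IsSquareField m D Γ)
    (hΓ_meas : ∀ u ∈ D, Measurable (Γ u u))
    (hΓ_int : ∀ u ∈ D, ∫⁻ x, ENNReal.ofReal (Γ u u x) ∂m < ∞)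
    (hf : ∀ n, f n ∈ D) (hcauchy : IsEnergyCauchy m Γ f)
    (hconv : TendstoInMeasure m (fun nm : ℕ × ℕ => f nm.1 - f nm.2) atTop 0)
    {φ' : ℝ → ℝ} (hφ'_le : ∀ t, |φ' t| ≤ 1) (hφ'_lip : LipschitzWith 1 φ')
    {g : ℕ → α → ℝ} (hg : ∀ n, g n ∈ D)
    (hchain : ∀ n k, ∀ᵐ x ∂m, Γ (g n) (g k) x = φ' (f n x) * φ' (f k x) * Γ (f n) (f k) x) :
    IsEnergyCauchy m Γ g := by
  have hw : TendstoInMeasure m (fun nm : ℕ × ℕ => fun x => φ' (f nm.1 x) - φ' (f nm.2 x))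
      atTop 0 :=
    tendstoInMeasure_zero_of_norm_le hconv fun nm x => by
      simpa using hφ'_lip.norm_sub_le (f nm.1 x) (f nm.2 x)
  have hwM : ∀ (nm : ℕ × ℕ) x, ‖φ' (f nm.1 x) - φ' (f nm.2 x)‖ ≤ 2 := fun nm x => by
    rw [Real.norm_eq_abs]
    linarith [abs_sub (φ' (f nm.1 x)) (φ' (f nm.2 x)), hφ'_le (f nm.1 x), hφ'_le (f nm.2 x)]
  have hweighted := hΓ.tendsto_lintegral_enorm_mul_of_isEnergyCauchy hΓ_meas hΓ_int hf hcauchy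
    hwM hw (tendsto_snd.mono_left prod_atTop_atTop_eq.ge)
  have hbound := (ENNReal.Tendsto.const_mul hcauchy (a := 2) (Or.inr ENNReal.ofNat_ne_top)).add
    (ENNReal.Tendsto.const_mul hweighted (a := 4) (Or.inr ENNReal.ofNat_ne_top))
  rw [mul_zero, mul_zero, add_zero] at hbound
  refine tendsto_of_tendsto_of_tendsto_of_le_of_le tendsto_const_nhds hbound (fun _ => zero_le)
    fun ⟨n, k⟩ => ?_
  have hdiff := hΓ.sub_mem (hf n) (hf k)
  calc ∫⁻ x, ENNReal.ofReal (Γ (g n - g k) (g n - g k) x) ∂m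
      ≤ ∫⁻ x, (2 * ENNReal.ofReal (Γ (f n - f k) (f n - f k) x)
        + 4 * (‖φ' (f n x) - φ' (f k x)‖ₑ * ENNReal.ofReal (Γ (f k) (f k) x))) ∂m :=
        lintegral_mono_ae <| hΓ.ae_apply_sub_le_of_chainRule (hf n) (hf k) (hg n) (hg k)
          (fun x => hφ'_le _) (fun x => hφ'_le _) (hchain n n) (hchain n k) (hchain k k)
    _ = _ := by
        rw [lintegral_add_left ((hΓ_meas _ hdiff).ennreal_ofReal.const_mul _),
          lintegral_const_mul _ (hΓ_meas _ hdiff).ennreal_ofReal,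
          lintegral_const_mul' _ _ (by simp)]

end IsSquareField

theorem sin_sq_le_abs_rpow (t : ℝ) {p : ℝ} (hp0 : 0 ≤ p) (hp2 : p ≤ 2) :
    Real.sin t ^ 2 ≤ |t| ^ p :=
  calc Real.sin t ^ 2 = |Real.sin t| ^ (2 : ℝ) := by rw [Real.rpow_two, sq_abs]
    _ ≤ |Real.sin t| ^ p :=
        Real.rpow_le_rpow_of_exponent_ge' (abs_nonneg _) (Real.abs_sin_le_one t) hp0 hp2
    _ ≤ |t| ^ p := Real.rpow_le_rpow (abs_nonneg _) Real.abs_sin_le_abs hp0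

theorem tendsto_lintegral_sin_comp_sq {α ι : Type*} [MeasurableSpace α] {m : Measure α}
    {l : Filter ι} {f : ι → α → ℝ} {p : ℝ} (hp0 : 0 ≤ p) (hp2 : p ≤ 2)
    (hf : Tendsto (fun i => ∫⁻ x, ENNReal.ofReal (|f i x| ^ p) ∂m) l (𝓝 0)) :
    Tendsto (fun i => ∫⁻ x, ENNReal.ofReal (Real.sin (f i x) ^ 2) ∂m) l (𝓝 0) :=
  tendsto_of_tendsto_of_tendsto_of_le_of_le tendsto_const_nhds hf (fun _ => zero_le) fun i =>
    lintegral_mono fun x => ENNReal.ofReal_le_ofReal (sin_sq_le_abs_rpow (f i x) hp0 hp2)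

theorem lintegral_ofReal_le_add_of_eq_cos_mul {α : Type*} [MeasurableSpace α] {m : Measure α}
    {F G h : α → ℝ} (hF : ∀ᵐ x ∂m, 0 ≤ F x) (hG : Measurable G)
    (hGF : ∀ᵐ x ∂m, G x = Real.cos (h x) * Real.cos (h x) * F x) :
    ∫⁻ x, ENNReal.ofReal (F x) ∂m
      ≤ ∫⁻ x, ENNReal.ofReal (G x) ∂m
        + ∫⁻ x, ‖Real.sin (h x) ^ 2‖ₑ * ENNReal.ofReal (F x) ∂m := by
  have hsplit : ∀ᵐ x ∂m, ENNReal.ofReal (F x)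
      ≤ ENNReal.ofReal (G x) + ‖Real.sin (h x) ^ 2‖ₑ * ENNReal.ofReal (F x) := by
    filter_upwards [hF, hGF] with x hFx hGx
    rw [hGx, Real.enorm_eq_ofReal_abs, abs_of_nonneg (sq_nonneg _),
      ← ENNReal.ofReal_mul (sq_nonneg _),
      ← ENNReal.ofReal_add (mul_nonneg (mul_self_nonneg _) hFx) (mul_nonneg (sq_nonneg _) hFx)]
    exact ENNReal.ofReal_le_ofReal (by nlinarith [Real.sin_sq_add_cos_sq (h x)])
  exact (lintegral_mono_ae hsplit).trans_eq (lintegral_add_left hG.ennreal_ofReal _)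

theorem closability_L2_to_Lp_general
    {α : Type*} [MeasurableSpace α] (m : Measure α) (p : ℝ)
    (hp1 : 1 ≤ p) (hp2 : p ≤ 2)
    (D : Set (α → ℝ))
    (hD_add : ∀ f ∈ D, ∀ g ∈ D, f + g ∈ D)
    (hD_smul : ∀ (c : ℝ), ∀ f ∈ D, c • f ∈ D)
    (hD_meas : ∀ f ∈ D, Measurable f)
    (Γ : (α → ℝ) → (α → ℝ) → α → ℝ)
    (hΓ_meas : ∀ f ∈ D, ∀ g ∈ D, Measurable (Γ f g))
    (hΓ_symm : ∀ f ∈ D, ∀ g ∈ D, Γ f g = Γ g f)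
    (hΓ_add : ∀ f ∈ D, ∀ g ∈ D, ∀ h ∈ D, Γ (f + g) h = Γ f h + Γ g h)
    (hΓ_smul : ∀ (c : ℝ), ∀ f ∈ D, ∀ g ∈ D, Γ (c • f) g = c • Γ f g)
    (hΓ_pos : ∀ f ∈ D, ∀ᵐ x ∂m, 0 ≤ Γ f f x)
    (hΓ_int : ∀ f ∈ D, ∫⁻ x, ENNReal.ofReal (Γ f f x) ∂m < ⊤)
    (hchain : ∀ φ ψ : ℝ → ℝ, ContDiff ℝ (⊤ : ℕ∞) φ → ContDiff ℝ (⊤ : ℕ∞) ψ →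
      (∀ n : ℕ, ∃ C : ℝ, ∀ t, |iteratedDeriv n φ t| ≤ C) →
      (∀ n : ℕ, ∃ C : ℝ, ∀ t, |iteratedDeriv n ψ t| ≤ C) →
      φ 0 = 0 → ψ 0 = 0 →
      ∀ f ∈ D, ∀ g ∈ D, (φ ∘ f) ∈ D ∧ (ψ ∘ g) ∈ D ∧
        (∀ᵐ x ∂m, Γ (φ ∘ f) (ψ ∘ g) x = deriv φ (f x) * deriv ψ (g x) * Γ f g x))
    (hL2 : ∀ g : ℕ → α → ℝ, (∀ n, g n ∈ D) →
      Tendsto (fun nm : ℕ × ℕ =>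
          ∫⁻ x, ENNReal.ofReal (Γ (g nm.1 - g nm.2) (g nm.1 - g nm.2) x) ∂m)
        atTop (𝓝 0) →
      Tendsto (fun n => ∫⁻ x, ENNReal.ofReal ((g n x) ^ 2) ∂m) atTop (𝓝 0) →
      Tendsto (fun n => ∫⁻ x, ENNReal.ofReal (Γ (g n) (g n) x) ∂m) atTop (𝓝 0)) :
    ∀ f : ℕ → α → ℝ, (∀ n, f n ∈ D) →
      Tendsto (fun nm : ℕ × ℕ =>
          ∫⁻ x, ENNReal.ofReal (Γ (f nm.1 - f nm.2) (f nm.1 - f nm.2) x) ∂m)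
        atTop (𝓝 0) →
      Tendsto (fun n => ∫⁻ x, ENNReal.ofReal (|f n x| ^ p) ∂m) atTop (𝓝 0) →
      Tendsto (fun n => ∫⁻ x, ENNReal.ofReal (Γ (f n) (f n) x) ∂m) atTop (𝓝 0) := by
  intro f hf hcauchy hLp
  have hΓ : IsSquareField m D Γ := ⟨hD_add, hD_smul, hΓ_symm, hΓ_add, hΓ_smul, hΓ_pos⟩
  have hΓ_meas' : ∀ u ∈ D, Measurable (Γ u u) := fun u hu => hΓ_meas u hu u hu
  have hp0 : 0 ≤ p := zero_le_one.trans hp1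
  have hsin_bdd : ∀ n : ℕ, ∃ C : ℝ, ∀ t, |iteratedDeriv n Real.sin t| ≤ C :=
    fun n => ⟨1, Real.abs_iteratedDeriv_sin_le_one n⟩
  have hsin := hchain _ _ Real.contDiff_sin Real.contDiff_sin hsin_bdd hsin_bdd Real.sin_zero
    Real.sin_zero
  simp only [Real.deriv_sin] at hsin
  set g : ℕ → α → ℝ := fun n => Real.sin ∘ f n
  have hgD : ∀ n, g n ∈ D := fun n => (hsin _ (hf n) _ (hf n)).1
  have hfm : TendstoInMeasure m f atTop 0 :=
    tendstoInMeasure_of_tendsto_lintegral_rpow (fun n => hD_meas _ (hf n)) hp0 hLp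
  have hgC : IsEnergyCauchy m Γ g :=
    hΓ.isEnergyCauchy_of_chainRule hΓ_meas' hΓ_int hf hcauchy hfm.sub_fst_snd
      Real.abs_cos_le_one Real.lipschitzWith_cos hgD fun n k => (hsin _ (hf n) _ (hf k)).2.2
  have hEg := hL2 g hgD hgC (tendsto_lintegral_sin_comp_sq hp0 hp2 hLp)
  have hrest := hΓ.tendsto_lintegral_enorm_mul_of_isEnergyCauchy hΓ_meas' hΓ_int hf hcauchy
    (w := fun n x => Real.sin (f n x) ^ 2) (M := 1)
    (fun n x => by simpa using Real.sin_sq_le_one (f n x))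
    (tendstoInMeasure_zero_of_norm_le hfm fun n x => by
      simpa using sin_sq_le_abs_rpow (f n x) zero_le_one one_le_two) tendsto_id
  have hlim := hEg.add hrest
  rw [add_zero] at hlim
  exact tendsto_of_tendsto_of_tendsto_of_le_of_le tendsto_const_nhds hlim (fun _ => zero_le)
    fun n => lintegral_ofReal_le_add_of_eq_cos_mul (hΓ_pos _ (hf n))
      (hΓ_meas' _ (hgD n)) (hsin _ (hf n) _ (hf n)).2.2

/-- **From `L²`-closability to `L^p`-closability, `1 ≤ p ≤ 2`.**
Let `D` be a linear space of bounded measurable functions with finite `p`-th moments and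
`Γ` a symmetric bilinear nonnegative square-field operator on `D` with finite energies,
satisfying the chain rule along smooth bounded functions (with bounded derivatives of all
orders) vanishing at `0`.  If the associated pre-form is closable in `L²(m)`, then it is
closable in `L^p(m)`. -/
theorem closability_L2_to_Lp
    {α : Type*} [MeasurableSpace α] (m : Measure α) (p : ℝ)
    (hp1 : 1 ≤ p) (hp2 : p ≤ 2)
    (D : Set (α → ℝ))
    (hD_add : ∀ f ∈ D, ∀ g ∈ D, f + g ∈ D)
    (hD_smul : ∀ (c : ℝ), ∀ f ∈ D, c • f ∈ D)
    (hD_meas : ∀ f ∈ D, Measurable f)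
    (hD_bdd : ∀ f ∈ D, ∃ C : ℝ, ∀ x, |f x| ≤ C)
    (hD_lp : ∀ f ∈ D, ∫⁻ x, ENNReal.ofReal (|f x| ^ p) ∂m < ⊤)
    (Γ : (α → ℝ) → (α → ℝ) → α → ℝ)
    (hΓ_meas : ∀ f ∈ D, ∀ g ∈ D, Measurable (Γ f g))
    (hΓ_symm : ∀ f ∈ D, ∀ g ∈ D, Γ f g = Γ g f)
    (hΓ_add : ∀ f ∈ D, ∀ g ∈ D, ∀ h ∈ D, Γ (f + g) h = Γ f h + Γ g h)
    (hΓ_smul : ∀ (c : ℝ), ∀ f ∈ D, ∀ g ∈ D, Γ (c • f) g = c • Γ f g)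
    (hΓ_pos : ∀ f ∈ D, ∀ᵐ x ∂m, 0 ≤ Γ f f x)
    (hΓ_int : ∀ f ∈ D, ∫⁻ x, ENNReal.ofReal (Γ f f x) ∂m < ⊤)
    (hchain : ∀ φ ψ : ℝ → ℝ, ContDiff ℝ (⊤ : ℕ∞) φ → ContDiff ℝ (⊤ : ℕ∞) ψ →
      (∀ n : ℕ, ∃ C : ℝ, ∀ t, |iteratedDeriv n φ t| ≤ C) →
      (∀ n : ℕ, ∃ C : ℝ, ∀ t, |iteratedDeriv n ψ t| ≤ C) →
      φ 0 = 0 → ψ 0 = 0 →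
      ∀ f ∈ D, ∀ g ∈ D, (φ ∘ f) ∈ D ∧ (ψ ∘ g) ∈ D ∧
        (∀ᵐ x ∂m, Γ (φ ∘ f) (ψ ∘ g) x = deriv φ (f x) * deriv ψ (g x) * Γ f g x))
    (hL2 : ∀ g : ℕ → α → ℝ, (∀ n, g n ∈ D) →
      Tendsto (fun nm : ℕ × ℕ =>
          ∫⁻ x, ENNReal.ofReal (Γ (g nm.1 - g nm.2) (g nm.1 - g nm.2) x) ∂m)
        atTop (𝓝 0) →
      Tendsto (fun n => ∫⁻ x, ENNReal.ofReal ((g n x) ^ 2) ∂m) atTop (𝓝 0) →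
      Tendsto (fun n => ∫⁻ x, ENNReal.ofReal (Γ (g n) (g n) x) ∂m) atTop (𝓝 0)) :
    ∀ f : ℕ → α → ℝ, (∀ n, f n ∈ D) →
      Tendsto (fun nm : ℕ × ℕ =>
          ∫⁻ x, ENNReal.ofReal (Γ (f nm.1 - f nm.2) (f nm.1 - f nm.2) x) ∂m)
        atTop (𝓝 0) →
      Tendsto (fun n => ∫⁻ x, ENNReal.ofReal (|f n x| ^ p) ∂m) atTop (𝓝 0) →
      Tendsto (fun n => ∫⁻ x, ENNReal.ofReal (Γ (f n) (f n) x) ∂m) atTop (𝓝 0) :=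
  closability_L2_to_Lp_general m p hp1 hp2 D hD_add hD_smul hD_meas Γ hΓ_meas hΓ_symm hΓ_add hΓ_smul
    hΓ_pos hΓ_int hchain hL2
end

section
/- Let (X, d) be a metric space, n ∈ ℕ, and x, y : {1, …, n} → X. Then the L²-transportation distance between the configurations ∑_{i=1}^n δ_{x_i} and ∑_{i=1}^n δ_{y_i} equals the minimum over all permutations σ of {1, …, n} of ( ∑_{i=1}^n d(x_i, y_{σ(i)})² )^{1/2}; in particular, the infimum over all couplings is attained, namely by the matching ∑_{i=1}^n δ_{(x_i, y_{σ(i)})} for any minimizing permutation σ. -/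
open MeasureTheory
open scoped ENNReal

/-- `q` is a coupling of `μ` and `ν`: its two marginals are `μ` and `ν`. -/
def IsCoupling {X : Type*} [MeasurableSpace X]
    (μ ν : Measure X) (q : Measure (X × X)) : Prop :=
  q.map Prod.fst = μ ∧ q.map Prod.snd = ν

/-- The `L²`-transportation (extended) distance between two Borel measures, with
`inf ∅ = ∞`. -/
noncomputable def transportDist {X : Type*} [MeasurableSpace X] [PseudoEMetricSpace X]
    (μ ν : Measure X) : ℝ≥0∞ :=
  ⨅ (q : Measure (X × X)) (_ : IsCoupling μ ν q),
    (∫⁻ p, edist p.1 p.2 ^ 2 ∂q) ^ (1 / 2 : ℝ)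

section Aux

open Finset

lemma coupling_matching {X : Type*} [MetricSpace X] [MeasurableSpace X] [BorelSpace X]
    {n : ℕ} (x y : Fin n → X) (σ : Equiv.Perm (Fin n)) :
    ((∑ i, Measure.dirac ((x i, y (σ i)) : X × X)).map Prod.fst = ∑ i, Measure.dirac (x i) ∧
     (∑ i, Measure.dirac ((x i, y (σ i)) : X × X)).map Prod.snd = ∑ i, Measure.dirac (y i)) ∧
    (∫⁻ p, edist p.1 p.2 ^ 2 ∂(∑ i, Measure.dirac ((x i, y (σ i)) : X × X))) =
      ∑ i, edist (x i) (y (σ i)) ^ 2 := by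
  refine ⟨⟨?_, ?_⟩, ?_⟩
  · ext s hs
    rw [Measure.map_apply measurable_fst hs]
    simp [Measure.finset_sum_apply, Measure.dirac_apply' _ hs,
      Measure.dirac_apply' _ (measurable_fst hs)]
    exact Finset.sum_congr rfl fun i _ => by by_cases h : x i ∈ s <;> simp [h]
  · ext s hs
    rw [Measure.map_apply measurable_snd hs]
    rw [Measure.finset_sum_apply, Measure.finset_sum_apply]
    rw [← Equiv.sum_comp σ (fun i => Measure.dirac (y i) s)]
    simp [Measure.dirac_apply' _ hs, Measure.dirac_apply' _ (measurable_snd hs)]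
    exact Finset.sum_congr rfl fun i _ => by by_cases h : y (σ i) ∈ s <;> simp [h]
  · rw [lintegral_finset_sum_measure]
    simp [lintegral_dirac]

lemma meas_finset {α : Type*} [MeasurableSpace α] [MeasurableSingletonClass α]
    (μ : Measure α) (F : Finset α) : μ ↑F = ∑ p ∈ F, μ {p} := by
  rw [← setLIntegral_one, lintegral_finset]
  simp

lemma exists_perm_le_cost {X : Type*} [MetricSpace X] [MeasurableSpace X] [BorelSpace X]
    {n : ℕ} (x y : Fin n → X) {q : Measure (X × X)}
    (h1 : q.map Prod.fst = ∑ i, Measure.dirac (x i))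
    (h2 : q.map Prod.snd = ∑ i, Measure.dirac (y i)) :
    ∃ σ : Equiv.Perm (Fin n),
      ∑ i, edist (x i) (y (σ i)) ^ 2 ≤ ∫⁻ p, edist p.1 p.2 ^ 2 ∂q := by
  classical
  set A : Finset X := univ.image x with hA
  set B : Finset X := univ.image y with hB
  -- finiteness of q
  have hqfin : ∀ p : X × X, q {p} ≠ ∞ := by
    intro p
    refine ((measure_mono (Set.subset_univ _)).trans_lt ?_).ne
    have : q Set.univ = (q.map Prod.fst) Set.univ := by
      rw [Measure.map_apply measurable_fst MeasurableSet.univ]; rfl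
    rw [this, h1]
    simp [Measure.finset_sum_apply]
  -- concentration on B in the second coordinate
  have hBc : q (Prod.snd ⁻¹' ((↑B : Set X)ᶜ)) = 0 := by
    rw [← Measure.map_apply measurable_snd (B.measurableSet.compl), h2]
    simp only [Measure.finset_sum_apply]
    refine Finset.sum_eq_zero fun i _ => ?_
    rw [Measure.dirac_apply' _ (B.measurableSet.compl)]
    simp [hB, Set.indicator_apply, Finset.mem_image]
  have hAc : q (Prod.fst ⁻¹' ((↑A : Set X)ᶜ)) = 0 := by
    rw [← Measure.map_apply measurable_fst (A.measurableSet.compl), h1]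
    simp only [Measure.finset_sum_apply]
    refine Finset.sum_eq_zero fun i _ => ?_
    rw [Measure.dirac_apply' _ (A.measurableSet.compl)]
    simp [hA, Set.indicator_apply, Finset.mem_image]
  -- row sums
  have hrow : ∀ a : X, ∑ b ∈ B, q {(a, b)} = (#{k | x k = a} : ℝ≥0∞) := by
    intro a
    have e1 : ∑ b ∈ B, q {(a, b)} = q (↑(({a} : Finset X) ×ˢ B)) := by
      rw [meas_finset, Finset.sum_product, Finset.sum_singleton]
    have e2 : q (↑(({a} : Finset X) ×ˢ B)) = q (Prod.fst ⁻¹' {a}) := by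
      apply le_antisymm
      · exact measure_mono (by rintro ⟨u, v⟩ hp; simp at hp ⊢; aesop)
      · calc q (Prod.fst ⁻¹' {a})
            ≤ q (↑(({a} : Finset X) ×ˢ B) ∪ Prod.snd ⁻¹' ((↑B : Set X)ᶜ)) := by
              refine measure_mono ?_
              rintro ⟨u, v⟩ hp
              simp at hp
              by_cases hv : v ∈ B <;> simp [hp, hv]
          _ ≤ q (↑(({a} : Finset X) ×ˢ B)) + q (Prod.snd ⁻¹' ((↑B : Set X)ᶜ)) :=
              measure_union_le _ _
          _ = q (↑(({a} : Finset X) ×ˢ B)) := by rw [hBc, add_zero]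
    have e3 : q (Prod.fst ⁻¹' {a}) = (#{k | x k = a} : ℝ≥0∞) := by
      rw [← Measure.map_apply measurable_fst (measurableSet_singleton a), h1]
      simp only [Measure.finset_sum_apply]
      rw [Finset.card_filter]
      push_cast
      refine Finset.sum_congr rfl fun i _ => ?_
      rw [Measure.dirac_apply' _ (measurableSet_singleton a)]
      by_cases h : x i = a <;> simp [Set.indicator_apply, h]
    rw [e1, e2, e3]
  have hcol : ∀ b : X, ∑ a ∈ A, q {(a, b)} = (#{k | y k = b} : ℝ≥0∞) := by
    intro b
    have e1 : ∑ a ∈ A, q {(a, b)} = q (↑(A ×ˢ ({b} : Finset X))) := by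
      rw [meas_finset, Finset.sum_product, Finset.sum_congr rfl]
      intro a _; rw [Finset.sum_singleton]
    have e2 : q (↑(A ×ˢ ({b} : Finset X))) = q (Prod.snd ⁻¹' {b}) := by
      apply le_antisymm
      · exact measure_mono (by rintro ⟨u, v⟩ hp; simp at hp ⊢; aesop)
      · calc q (Prod.snd ⁻¹' {b})
            ≤ q (↑(A ×ˢ ({b} : Finset X)) ∪ Prod.fst ⁻¹' ((↑A : Set X)ᶜ)) := by
              refine measure_mono ?_
              rintro ⟨u, v⟩ hp
              simp at hp
              by_cases hu : u ∈ A <;> simp [hp, hu]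
          _ ≤ q (↑(A ×ˢ ({b} : Finset X))) + q (Prod.fst ⁻¹' ((↑A : Set X)ᶜ)) :=
              measure_union_le _ _
          _ = _ := by rw [hAc, add_zero]
    have e3 : q (Prod.snd ⁻¹' {b}) = (#{k | y k = b} : ℝ≥0∞) := by
      rw [← Measure.map_apply measurable_snd (measurableSet_singleton b), h2]
      simp only [Measure.finset_sum_apply]
      rw [Finset.card_filter]
      push_cast
      refine Finset.sum_congr rfl fun i _ => ?_
      rw [Measure.dirac_apply' _ (measurableSet_singleton b)]
      by_cases h : y i = b <;> simp [Set.indicator_apply, h]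
    rw [e1, e2, e3]
  -- real-valued data
  set c : X → X → ℝ := fun a b => dist a b ^ 2 with hc
  set m : X → X → ℝ := fun a b => (q {(a, b)}).toReal with hm
  set sX : X → ℝ := fun a => (#{k | x k = a} : ℝ) with hsX
  set sY : X → ℝ := fun b => (#{k | y k = b} : ℝ) with hsY
  have hsYpos : ∀ b ∈ B, 0 < sY b := by
    intro b hb
    rw [hB, Finset.mem_image] at hb
    obtain ⟨k, -, rfl⟩ := hb
    have : k ∈ ({k' | y k' = y k} : Finset (Fin n)) := by simp
    exact_mod_cast Nat.cast_pos.2 (Finset.card_pos.2 ⟨k, this⟩)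
  have hsXpos : ∀ a ∈ A, 0 < sX a := by
    intro a ha
    rw [hA, Finset.mem_image] at ha
    obtain ⟨k, -, rfl⟩ := ha
    have : k ∈ ({k' | x k' = x k} : Finset (Fin n)) := by simp
    exact_mod_cast Nat.cast_pos.2 (Finset.card_pos.2 ⟨k, this⟩)
  have hrowR : ∀ a : X, ∑ b ∈ B, m a b = sX a := by
    intro a
    rw [hm, ← ENNReal.toReal_sum (fun b _ => hqfin _), hrow a]
    simp [hsX]
  have hcolR : ∀ b : X, ∑ a ∈ A, m a b = sY b := by
    intro b
    rw [hm, ← ENNReal.toReal_sum (fun a _ => hqfin _), hcol b]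
    simp [hsY]
  set M : Matrix (Fin n) (Fin n) ℝ :=
    Matrix.of fun i j => m (x i) (y j) / (sX (x i) * sY (y j)) with hM
  have hxA : ∀ i, x i ∈ A := fun i => Finset.mem_image_of_mem x (mem_univ i)
  have hyB : ∀ j, y j ∈ B := fun j => Finset.mem_image_of_mem y (mem_univ j)
  have hmnn : ∀ a b, 0 ≤ m a b := fun a b => ENNReal.toReal_nonneg
  have hMds : M ∈ doublyStochastic ℝ (Fin n) := by
    rw [mem_doublyStochastic_iff_sum]
    refine ⟨fun i j => div_nonneg (hmnn _ _)
      (mul_nonneg (hsXpos _ (hxA i)).le (hsYpos _ (hyB j)).le), ?_, ?_⟩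
    · intro i
      have step : ∑ j, m (x i) (y j) / (sX (x i) * sY (y j))
          = ∑ b ∈ B, #{k | y k = b} • (m (x i) b / (sX (x i) * sY b)) :=
        Finset.sum_comp (fun b => m (x i) b / (sX (x i) * sY b)) y
      have e : ∀ b ∈ B, #{k | y k = b} • (m (x i) b / (sX (x i) * sY b))
          = m (x i) b / sX (x i) := by
        intro b hb
        have h2 := (hsYpos b hb).ne'
        rw [nsmul_eq_mul, show (#{k | y k = b} : ℝ) = sY b from rfl,
          ← mul_div_assoc, mul_comm (sX (x i)) (sY b), mul_div_mul_left _ _ h2]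
      show ∑ j, m (x i) (y j) / (sX (x i) * sY (y j)) = 1
      rw [step, Finset.sum_congr rfl e, ← Finset.sum_div, hrowR,
        div_self (hsXpos _ (hxA i)).ne']
    · intro j
      have step : ∑ i, m (x i) (y j) / (sX (x i) * sY (y j))
          = ∑ a ∈ A, #{k | x k = a} • (m a (y j) / (sX a * sY (y j))) :=
        Finset.sum_comp (fun a => m a (y j) / (sX a * sY (y j))) x
      have e : ∀ a ∈ A, #{k | x k = a} • (m a (y j) / (sX a * sY (y j)))
          = m a (y j) / sY (y j) := by
        intro a ha
        have h2 := (hsXpos a ha).ne'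
        rw [nsmul_eq_mul, show (#{k | x k = a} : ℝ) = sX a from rfl,
          ← mul_div_assoc, mul_div_mul_left _ _ h2]
      show ∑ i, m (x i) (y j) / (sX (x i) * sY (y j)) = 1
      rw [step, Finset.sum_congr rfl e, ← Finset.sum_div, hcolR,
        div_self (hsYpos _ (hyB j)).ne']
  -- the cost of M equals the discrete cost of q
  have hcostR : ∑ i, ∑ j, M i j * c (x i) (y j) = ∑ a ∈ A, ∑ b ∈ B, m a b * c a b := by
    calc ∑ i, ∑ j, M i j * c (x i) (y j)
        = ∑ i, ∑ j, m (x i) (y j) * c (x i) (y j) / (sX (x i) * sY (y j)) :=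
          Finset.sum_congr rfl fun i _ => Finset.sum_congr rfl fun j _ =>
            div_mul_eq_mul_div _ _ _
      _ = ∑ i, (∑ b ∈ B, m (x i) b * c (x i) b) / sX (x i) := by
          refine Finset.sum_congr rfl fun i _ => ?_
          have h : ∑ j, m (x i) (y j) * c (x i) (y j) / (sX (x i) * sY (y j))
              = ∑ b ∈ B, #{k | y k = b} • (m (x i) b * c (x i) b / (sX (x i) * sY b)) :=
            Finset.sum_comp (fun b => m (x i) b * c (x i) b / (sX (x i) * sY b)) y
          have e : ∀ b ∈ B, #{k | y k = b} • (m (x i) b * c (x i) b / (sX (x i) * sY b))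
              = m (x i) b * c (x i) b / sX (x i) := by
            intro b hb
            have h2 := (hsYpos b hb).ne'
            rw [nsmul_eq_mul, show (#{k | y k = b} : ℝ) = sY b from rfl,
              ← mul_div_assoc, mul_comm (sX (x i)) (sY b), mul_div_mul_left _ _ h2]
          rw [h, Finset.sum_congr rfl e, ← Finset.sum_div]
      _ = ∑ a ∈ A, #{k | x k = a} • ((∑ b ∈ B, m a b * c a b) / sX a) :=
          Finset.sum_comp (fun a => (∑ b ∈ B, m a b * c a b) / sX a) x
      _ = ∑ a ∈ A, ∑ b ∈ B, m a b * c a b := by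
          refine Finset.sum_congr rfl fun a ha => ?_
          rw [nsmul_eq_mul, show (#{k | x k = a} : ℝ) = sX a from rfl,
            mul_div_cancel₀ _ (hsXpos a ha).ne']
  -- Birkhoff
  obtain ⟨w, hw0, hw1, hwM⟩ := exists_eq_sum_perm_of_mem_doublyStochastic hMds
  set F : Equiv.Perm (Fin n) → ℝ := fun σ => ∑ i, c (x i) (y (σ i)) with hF
  have hMentry : ∀ i j, M i j
      = ∑ σ : Equiv.Perm (Fin n), w σ * (if σ i = j then 1 else 0) := by
    intro i j
    rw [← hwM]
    simp [Matrix.sum_apply, PEquiv.toMatrix_apply, Equiv.toPEquiv_apply]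
  have hMF : ∑ i, ∑ j, M i j * c (x i) (y j) = ∑ σ : Equiv.Perm (Fin n), w σ * F σ := by
    calc ∑ i, ∑ j, M i j * c (x i) (y j)
        = ∑ i, ∑ j, ∑ σ : Equiv.Perm (Fin n),
            w σ * (if σ i = j then c (x i) (y j) else 0) := by
          refine sum_congr rfl fun i _ => sum_congr rfl fun j _ => ?_
          rw [hMentry, Finset.sum_mul]
          exact sum_congr rfl fun σ _ => by rw [mul_assoc, ite_mul, one_mul, zero_mul]
      _ = ∑ σ : Equiv.Perm (Fin n), ∑ i, ∑ j,
            w σ * (if σ i = j then c (x i) (y j) else 0) := by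
          rw [show (∑ i, ∑ j, ∑ σ : Equiv.Perm (Fin n),
              w σ * (if σ i = j then c (x i) (y j) else 0))
            = ∑ i, ∑ σ : Equiv.Perm (Fin n), ∑ j,
              w σ * (if σ i = j then c (x i) (y j) else 0) from
            Finset.sum_congr rfl fun i _ => Finset.sum_comm]
          exact Finset.sum_comm
      _ = ∑ σ : Equiv.Perm (Fin n), w σ * F σ := by
          refine sum_congr rfl fun σ _ => ?_
          calc ∑ i, ∑ j, w σ * (if σ i = j then c (x i) (y j) else 0)
              = ∑ i, w σ * c (x i) (y (σ i)) := by
                refine sum_congr rfl fun i _ => ?_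
                rw [← Finset.mul_sum, Finset.sum_ite_eq, if_pos (mem_univ _)]
            _ = w σ * F σ := by rw [hF, Finset.mul_sum]
  obtain ⟨σ0, -, hσ0⟩ := Finset.exists_min_image univ F ⟨1, mem_univ 1⟩
  have hFle : F σ0 ≤ ∑ a ∈ A, ∑ b ∈ B, m a b * c a b := by
    rw [← hcostR, hMF]
    calc F σ0 = ∑ σ : Equiv.Perm (Fin n), w σ * F σ0 := by
          rw [← Finset.sum_mul, hw1, one_mul]
      _ ≤ ∑ σ : Equiv.Perm (Fin n), w σ * F σ :=
          sum_le_sum fun σ _ => mul_le_mul_of_nonneg_left (hσ0 σ (mem_univ σ)) (hw0 σ)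
  -- back to ℝ≥0∞
  refine ⟨σ0, ?_⟩
  have hterm : ∀ p : X × X, (edist p.1 p.2 ^ 2 * q {p}) ≠ ∞ := fun p =>
    ENNReal.mul_ne_top (ENNReal.pow_ne_top (edist_ne_top _ _)) (hqfin p)
  have hcost_le : ∑ p ∈ A ×ˢ B, edist p.1 p.2 ^ 2 * q {p}
      ≤ ∫⁻ p, edist p.1 p.2 ^ 2 ∂q := by
    rw [← lintegral_finset]
    exact setLIntegral_le_lintegral _ _
  have hcostS_ne : (∑ p ∈ A ×ˢ B, edist p.1 p.2 ^ 2 * q {p}) ≠ ∞ :=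
    (ENNReal.sum_lt_top.2 fun p _ => (hterm p).lt_top).ne
  have htr : (∑ p ∈ A ×ˢ B, edist p.1 p.2 ^ 2 * q {p}).toReal
      = ∑ a ∈ A, ∑ b ∈ B, m a b * c a b := by
    rw [ENNReal.toReal_sum (fun p _ => hterm p), Finset.sum_product]
    refine sum_congr rfl fun a _ => sum_congr rfl fun b _ => ?_
    rw [ENNReal.toReal_mul, ENNReal.toReal_pow, edist_dist,
      ENNReal.toReal_ofReal dist_nonneg, mul_comm]
  have hofReal : ∑ i, edist (x i) (y (σ0 i)) ^ 2 = ENNReal.ofReal (F σ0) := by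
    rw [hF, ENNReal.ofReal_sum_of_nonneg (fun i _ => sq_nonneg _)]
    refine sum_congr rfl fun i _ => ?_
    rw [edist_dist, ← ENNReal.ofReal_pow dist_nonneg]
  calc ∑ i, edist (x i) (y (σ0 i)) ^ 2 = ENNReal.ofReal (F σ0) := hofReal
    _ ≤ ENNReal.ofReal ((∑ p ∈ A ×ˢ B, edist p.1 p.2 ^ 2 * q {p}).toReal) :=
        ENNReal.ofReal_le_ofReal (htr ▸ hFle)
    _ = ∑ p ∈ A ×ˢ B, edist p.1 p.2 ^ 2 * q {p} := ENNReal.ofReal_toReal hcostS_ne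
    _ ≤ _ := hcost_le

end Aux

/-- **The `L²`-transportation distance between two `n`-point configurations equals the
minimum over permutations of the `ℓ²`-matching cost**, and the infimum over couplings is
attained by the matching `∑ δ_{(xᵢ, y_{σ i})}` for any minimizing permutation `σ`. -/
theorem transportDist_finite_config
    {X : Type*} [MetricSpace X] [MeasurableSpace X] [BorelSpace X]
    (n : ℕ) (x y : Fin n → X) :
    (transportDist (∑ i, Measure.dirac (x i)) (∑ i, Measure.dirac (y i)) =
      ⨅ σ : Equiv.Perm (Fin n), (∑ i, edist (x i) (y (σ i)) ^ 2) ^ (1 / 2 : ℝ)) ∧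
    ∀ σ : Equiv.Perm (Fin n),
      ((∑ i, edist (x i) (y (σ i)) ^ 2) ^ (1 / 2 : ℝ) =
        ⨅ τ : Equiv.Perm (Fin n), (∑ i, edist (x i) (y (τ i)) ^ 2) ^ (1 / 2 : ℝ)) →
      IsCoupling (∑ i, Measure.dirac (x i)) (∑ i, Measure.dirac (y i))
        (∑ i, Measure.dirac (x i, y (σ i))) ∧
      (∫⁻ p, edist p.1 p.2 ^ 2 ∂(∑ i, Measure.dirac (x i, y (σ i)))) ^ (1 / 2 : ℝ) =
        transportDist (∑ i, Measure.dirac (x i)) (∑ i, Measure.dirac (y i)) := by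
  have hub : ∀ σ : Equiv.Perm (Fin n),
      transportDist (∑ i, Measure.dirac (x i)) (∑ i, Measure.dirac (y i))
        ≤ (∑ i, edist (x i) (y (σ i)) ^ 2) ^ (1 / 2 : ℝ) := by
    intro σ
    obtain ⟨⟨hc1, hc2⟩, hcost⟩ := coupling_matching x y σ
    calc transportDist (∑ i, Measure.dirac (x i)) (∑ i, Measure.dirac (y i))
        ≤ (∫⁻ p, edist p.1 p.2 ^ 2 ∂(∑ i, Measure.dirac ((x i, y (σ i)) : X × X)))
            ^ (1 / 2 : ℝ) :=
          iInf₂_le (∑ i, Measure.dirac ((x i, y (σ i)) : X × X)) ⟨hc1, hc2⟩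
      _ = (∑ i, edist (x i) (y (σ i)) ^ 2) ^ (1 / 2 : ℝ) := by rw [hcost]
  have hlb : (⨅ σ : Equiv.Perm (Fin n), (∑ i, edist (x i) (y (σ i)) ^ 2) ^ (1 / 2 : ℝ))
      ≤ transportDist (∑ i, Measure.dirac (x i)) (∑ i, Measure.dirac (y i)) := by
    refine le_iInf fun q => le_iInf fun hq => ?_
    obtain ⟨σ, hσ⟩ := exists_perm_le_cost x y hq.1 hq.2
    exact (iInf_le _ σ).trans (ENNReal.rpow_le_rpow hσ (by norm_num))
  have heq : transportDist (∑ i, Measure.dirac (x i)) (∑ i, Measure.dirac (y i))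
      = ⨅ σ : Equiv.Perm (Fin n), (∑ i, edist (x i) (y (σ i)) ^ 2) ^ (1 / 2 : ℝ) :=
    le_antisymm (le_iInf hub) hlb
  refine ⟨heq, fun σ hmin => ?_⟩
  obtain ⟨⟨hc1, hc2⟩, hcost⟩ := coupling_matching x y σ
  exact ⟨⟨hc1, hc2⟩, by rw [hcost, hmin, ← heq]⟩
end

section
/- Let (X, d) be a metric space, E ⊆ X a subset, and k, m, n ∈ ℕ. For i = 1, …, k let f_i : X → ℝ be Lipschitz with constant L_i and satisfy f_i(z) = 0 for every z ∉ E, and let F : ℝ^k → ℝ be Lipschitz with constant K with respect to the Euclidean norm on ℝ^k. Let x, y : {1, …, m} → X be such that the number of indices p with x_p ∈ E is at most n and the number of indices p with y_p ∈ E is at most n. Then | F( ∑_{p=1}^m f_1(x_p), …, ∑_{p=1}^m f_k(x_p) ) − F( ∑_{p=1}^m f_1(y_p), …, ∑_{p=1}^m f_k(y_p) ) | ≤ K · √(2·n·k) · (max_{1≤i≤k} L_i) · ( ∑_{p=1}^m d(x_p, y_p)² )^{1/2}. -/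
open scoped NNReal

/-- **Quantitative local Lipschitz estimate for cylinder functions.**
If each `fᵢ` is `Lᵢ`-Lipschitz and vanishes off `E`, `F` is `K`-Lipschitz for the Euclidean
norm on `ℝ^k`, and the families `x, y : Fin m → X` each have at most `n` points in `E`, then
`|F(∑ₚ f(xₚ)) − F(∑ₚ f(yₚ))| ≤ K·√(2nk)·(maxᵢ Lᵢ)·√(∑ₚ d(xₚ, yₚ)²)`. -/
theorem cylinder_function_local_lipschitz
    {X : Type*} [MetricSpace X] (E : Set X) (k m n : ℕ)
    (f : Fin k → X → ℝ) (L : Fin k → ℝ≥0) (K : ℝ≥0)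
    (hf_lip : ∀ i, LipschitzWith (L i) (f i))
    (hf_supp : ∀ i, ∀ z, z ∉ E → f i z = 0)
    (F : (Fin k → ℝ) → ℝ)
    (hF : ∀ a b : Fin k → ℝ, |F a - F b| ≤ (K : ℝ) * Real.sqrt (∑ i, (a i - b i) ^ 2))
    (x y : Fin m → X)
    (hx : {p : Fin m | x p ∈ E}.ncard ≤ n)
    (hy : {p : Fin m | y p ∈ E}.ncard ≤ n) :
    |F (fun i => ∑ p, f i (x p)) - F (fun i => ∑ p, f i (y p))| ≤
      (K : ℝ) * Real.sqrt (2 * (n : ℝ) * (k : ℝ)) * ((Finset.univ.sup L : ℝ≥0) : ℝ) *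
        Real.sqrt (∑ p, dist (x p) (y p) ^ 2) := by
  classical
  set S : Finset (Fin m) := Finset.univ.filter (fun p => x p ∈ E ∨ y p ∈ E) with hSdef
  have hScard : (S.card : ℝ) ≤ 2 * n := by
    have hsub : S ⊆ (Finset.univ.filter (fun p => x p ∈ E)) ∪
        (Finset.univ.filter (fun p => y p ∈ E)) := by
      intro p hp
      simp only [hSdef, Finset.mem_filter, Finset.mem_univ, true_and] at hp
      rcases hp with h | h <;> simp [Finset.mem_union, Finset.mem_filter, h]
    have h1 : (Finset.univ.filter (fun p => x p ∈ E)).card ≤ n := by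
      have : {p : Fin m | x p ∈ E} = ↑(Finset.univ.filter (fun p => x p ∈ E)) := by
        ext p; simp
      rwa [this, Set.ncard_coe_finset] at hx
    have h2 : (Finset.univ.filter (fun p => y p ∈ E)).card ≤ n := by
      have : {p : Fin m | y p ∈ E} = ↑(Finset.univ.filter (fun p => y p ∈ E)) := by
        ext p; simp
      rwa [this, Set.ncard_coe_finset] at hy
    have := (Finset.card_le_card hsub).trans
      ((Finset.card_union_le _ _).trans (Nat.add_le_add h1 h2))
    calc (S.card : ℝ) ≤ ((n + n : ℕ) : ℝ) := by exact_mod_cast this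
      _ = 2 * n := by push_cast; ring
  set M : ℝ := ((Finset.univ.sup L : ℝ≥0) : ℝ) with hMdef
  have hM0 : 0 ≤ M := (Finset.univ.sup L).coe_nonneg
  have hML : ∀ i, (L i : ℝ) ≤ M := fun i => by
    exact_mod_cast (Finset.le_sup (Finset.mem_univ i) : L i ≤ Finset.univ.sup L)
  set T : ℝ := ∑ p ∈ S, dist (x p) (y p) with hTdef
  have hT0 : 0 ≤ T := Finset.sum_nonneg fun p _ => dist_nonneg
  have hD0 : (0:ℝ) ≤ ∑ p, dist (x p) (y p) ^ 2 :=
    Finset.sum_nonneg fun p _ => sq_nonneg _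
  -- bound on each coordinate
  have hA : ∀ i, |(∑ p, f i (x p)) - (∑ p, f i (y p))| ≤ M * T := by
    intro i
    have hzero : ∀ p ∈ Finset.univ \ S, f i (x p) - f i (y p) = 0 := by
      intro p hp
      simp only [hSdef, Finset.mem_sdiff, Finset.mem_filter, Finset.mem_univ, true_and,
        not_or] at hp
      rw [hf_supp i _ hp.1, hf_supp i _ hp.2, sub_zero]
    have hsum : (∑ p, f i (x p)) - (∑ p, f i (y p)) = ∑ p ∈ S, (f i (x p) - f i (y p)) := by
      rw [← Finset.sum_sub_distrib]
      exact (Finset.sum_subset (Finset.subset_univ S)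
        (fun p _ hp => hzero p (Finset.mem_sdiff.2 ⟨Finset.mem_univ p, hp⟩))).symm
    rw [hsum]
    calc |∑ p ∈ S, (f i (x p) - f i (y p))| ≤ ∑ p ∈ S, |f i (x p) - f i (y p)| :=
          Finset.abs_sum_le_sum_abs _ _
      _ ≤ ∑ p ∈ S, M * dist (x p) (y p) := by
          refine Finset.sum_le_sum fun p _ => ?_
          calc |f i (x p) - f i (y p)| ≤ (L i : ℝ) * dist (x p) (y p) := by
                have := (hf_lip i).dist_le_mul (x p) (y p)
                simpa [Real.dist_eq] using this
            _ ≤ M * dist (x p) (y p) := by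
                exact mul_le_mul_of_nonneg_right (hML i) dist_nonneg
      _ = M * T := by rw [hTdef, Finset.mul_sum]
  have hT2 : T ^ 2 ≤ 2 * n * ∑ p, dist (x p) (y p) ^ 2 := by
    calc T ^ 2 ≤ S.card * ∑ p ∈ S, dist (x p) (y p) ^ 2 :=
          sq_sum_le_card_mul_sum_sq
      _ ≤ 2 * n * ∑ p, dist (x p) (y p) ^ 2 := by
          refine mul_le_mul hScard ?_ (Finset.sum_nonneg fun p _ => sq_nonneg _)
            (by positivity)
          exact Finset.sum_le_sum_of_subset_of_nonneg (Finset.subset_univ S)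
            (fun p _ _ => sq_nonneg _)
  have hsum2 : (∑ i, ((∑ p, f i (x p)) - (∑ p, f i (y p))) ^ 2) ≤
      2 * n * k * (M ^ 2 * ∑ p, dist (x p) (y p) ^ 2) := by
    calc (∑ i, ((∑ p, f i (x p)) - (∑ p, f i (y p))) ^ 2)
        ≤ ∑ _i : Fin k, (M * T) ^ 2 := by
          refine Finset.sum_le_sum fun i _ => ?_
          rw [← sq_abs]
          exact pow_le_pow_left₀ (abs_nonneg _) (hA i) 2
      _ = k * (M * T) ^ 2 := by simp [mul_comm]
      _ ≤ 2 * n * k * (M ^ 2 * ∑ p, dist (x p) (y p) ^ 2) := by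
          have : (M * T) ^ 2 = M ^ 2 * T ^ 2 := by ring
          rw [this]
          have := mul_le_mul_of_nonneg_left hT2 (sq_nonneg M)
          nlinarith [sq_nonneg M, Nat.cast_nonneg (α := ℝ) k]
  calc |F (fun i => ∑ p, f i (x p)) - F (fun i => ∑ p, f i (y p))|
      ≤ (K : ℝ) * Real.sqrt (∑ i, ((∑ p, f i (x p)) - (∑ p, f i (y p))) ^ 2) := hF _ _
    _ ≤ (K : ℝ) * Real.sqrt (2 * n * k * (M ^ 2 * ∑ p, dist (x p) (y p) ^ 2)) := by
        exact mul_le_mul_of_nonneg_left (Real.sqrt_le_sqrt hsum2) K.coe_nonneg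
    _ = (K : ℝ) * Real.sqrt (2 * (n : ℝ) * (k : ℝ)) * M *
        Real.sqrt (∑ p, dist (x p) (y p) ^ 2) := by
        rw [Real.sqrt_mul (by positivity), Real.sqrt_mul (sq_nonneg M), Real.sqrt_sq hM0]
        ring
end

section
/- Let X be a Hausdorff topological space and a : ℝ → X a continuous map with a(t + 2) = a(t) for all t ∈ ℝ, whose restriction to the interval [0, 2) is injective (a nontrivial simple loop). Then there is no continuous map s : [0, 1] → X such that s(t) ∈ {a(t), a(t+1)} for every t ∈ [0, 1], s(0) = a(0), and s(1) = s(0). -/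
/-! On `[0, 1]` the two candidate labels `a t` and `a (t + 1)` never coincide, so the set where
`s` follows `a t` and the set where it follows `a (t + 1)` are disjoint closed sets covering
`[0, 1]`. By connectedness `s` follows `a t` throughout, and then `s 1 = s 0 = a 0` forces
`a 1 = a 0`, contradicting injectivity of the loop. -/

open Set

theorem IsPreconnected.eqOn_of_eq_or_eq {α X : Type*} [TopologicalSpace α] [TopologicalSpace X]
    [T2Space X] {S : Set α} (hS : IsPreconnected S) (hS_closed : IsClosed S) {s f g : α → X}
    (hs : ContinuousOn s S) (hf : ContinuousOn f S) (hg : ContinuousOn g S)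
    (hsel : ∀ t ∈ S, s t = f t ∨ s t = g t) (hfg : ∀ t ∈ S, f t ≠ g t)
    {t₀ : α} (ht₀ : t₀ ∈ S) (h : s t₀ = f t₀) : EqOn s f S := by
  have hcover : S ⊆ {t ∈ S | s t = f t} ∪ {t ∈ S | s t = g t} :=
    fun t ht => (hsel t ht).imp (⟨ht, ·⟩) (⟨ht, ·⟩)
  have hdisj : S ∩ ({t ∈ S | s t = f t} ∩ {t ∈ S | s t = g t}) = ∅ :=
    eq_empty_of_forall_notMem fun t ⟨ht, ⟨_, hsf⟩, ⟨_, hsg⟩⟩ => hfg t ht (hsf ▸ hsg)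
  rcases isPreconnected_iff_subset_of_disjoint_closed.mp hS _ _ (hS_closed.isClosed_eq hs hf)
    (hS_closed.isClosed_eq hs hg) hcover hdisj with hSf | hSg
  · exact fun t ht => (hSf ht).2
  · exact absurd (h ▸ (hSg ht₀).2) (hfg t₀ ht₀)

theorem Function.Periodic.apply_ne_apply_add_of_injOn {X : Type*} {a : ℝ → X} {c : ℝ}
    (hc : 0 < c) (hper : Function.Periodic a (2 * c)) (hinj : InjOn a (Ico 0 (2 * c)))
    {t : ℝ} (ht : t ∈ Icc 0 c) : a t ≠ a (t + c) := by
  intro h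
  rcases ht.2.lt_or_eq with htc | rfl
  · have := hinj ⟨ht.1, by linarith⟩ ⟨by linarith [ht.1], by linarith⟩ h
    linarith
  · have hc0 : a t = a 0 := by
      rw [h, ← two_mul, ← zero_add (2 * t), hper]
    have := hinj ⟨hc.le, by linarith⟩ ⟨le_rfl, by linarith⟩ hc0
    linarith

/-- **No continuous selection of a label along a simple loop.**
If `a : ℝ → X` is a continuous `2`-periodic map into a Hausdorff space whose restriction to
`[0, 2)` is injective (a nontrivial simple loop), then there is no continuous
`s : [0, 1] → X` with `s t ∈ {a t, a (t+1)}` for every `t ∈ [0, 1]`, `s 0 = a 0`, and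
`s 1 = s 0`. -/
theorem no_continuous_selection_along_simple_loop
    {X : Type*} [TopologicalSpace X] [T2Space X]
    (a : ℝ → X) (ha : Continuous a)
    (hper : ∀ t : ℝ, a (t + 2) = a t)
    (hinj : Set.InjOn a (Set.Ico (0 : ℝ) 2)) :
    ¬ ∃ s : ℝ → X, ContinuousOn s (Set.Icc 0 1) ∧
      (∀ t ∈ Set.Icc (0 : ℝ) 1, s t = a t ∨ s t = a (t + 1)) ∧
      s 0 = a 0 ∧ s 1 = s 0 := by
  rintro ⟨s, hs, hsel, h0, h1⟩
  have hper' : Function.Periodic a (2 * 1) := by simpa using hper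
  have hinj' : InjOn a (Ico 0 (2 * 1)) := by simpa using hinj
  have hne : ∀ t ∈ Icc (0 : ℝ) 1, a t ≠ a (t + 1) :=
    fun t ht => hper'.apply_ne_apply_add_of_injOn one_pos hinj' ht
  have hsa : EqOn s a (Icc 0 1) :=
    isPreconnected_Icc.eqOn_of_eq_or_eq isClosed_Icc hs ha.continuousOn
      (ha.comp (continuous_add_const 1)).continuousOn hsel hne (left_mem_Icc.2 zero_le_one) h0
  have ha1 : a 1 = a 0 := (hsa (right_mem_Icc.2 zero_le_one)).symm.trans (h1.trans h0)
  exact hne 0 (left_mem_Icc.2 zero_le_one) (by rw [zero_add, ha1])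
end

section
/- Let (X, d) be a nonempty metric space and m a Borel measure on X that is finite on every bounded Borel set. Then there exists a function φ : X → ℝ such that 0 < φ(x) ≤ 1 for every x ∈ X, φ is 1-Lipschitz (|φ(x) − φ(y)| ≤ d(x, y) for all x, y), and ∫_X φ² dm ≤ 1 (in particular φ ∈ L²(m)). -/
open MeasureTheory

lemma aux_lip (c a b : ℝ) :
    min 1 (c + max 0 a) ≤ min 1 (c + max 0 b) + |a - b| := by
  have h := abs_max_sub_max_le_abs a b 0
  have h2 : max 0 a ≤ max 0 b + |a - b| := by
    rw [max_comm 0 a, max_comm 0 b]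
    have := (abs_le.mp h).2
    linarith
  have habs : 0 ≤ |a - b| := abs_nonneg _
  rw [min_def, min_def]
  split_ifs <;> linarith

lemma aux_geom : ∑' n : ℕ, ENNReal.ofReal ((1/2:ℝ) ^ (n+1)) ≤ 1 := by
  have h : ∀ n : ℕ, ENNReal.ofReal ((1/2:ℝ) ^ (n+1)) = (2 : ENNReal)⁻¹ ^ (n+1) := by
    intro n
    rw [ENNReal.ofReal_pow (by norm_num)]
    congr 1
    rw [one_div, ENNReal.ofReal_inv_of_pos (by norm_num)]
    norm_num
  simp_rw [h, pow_succ']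
  rw [ENNReal.tsum_mul_left, ENNReal.tsum_geometric]
  simp [ENNReal.one_sub_inv_two]

/-- **Existence of a strictly positive bounded Lipschitz function with unit-bounded
`L²`-norm.**  On a nonempty metric space with a Borel measure finite on bounded Borel
sets, there exists `φ` with `0 < φ ≤ 1`, `φ` `1`-Lipschitz, and `∫ φ² dm ≤ 1`
(in particular `φ ∈ L²(m)`). -/
theorem exists_positive_lipschitz_unit_L2
    {X : Type*} [MetricSpace X] [Nonempty X]
    [MeasurableSpace X] [BorelSpace X]
    (m : Measure X)
    (hm : ∀ B : Set X, Bornology.IsBounded B → MeasurableSet B → m B < ⊤) :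
    ∃ φ : X → ℝ, (∀ x, 0 < φ x ∧ φ x ≤ 1) ∧ LipschitzWith 1 φ ∧
      ∫⁻ x, ENNReal.ofReal (φ x ^ 2) ∂m ≤ 1 := by
  obtain ⟨x₀⟩ := ‹Nonempty X›
  set M : ℕ → ℝ := fun n => max 1 (m (Metric.closedBall x₀ (n + 1))).toReal with hM
  have hMfin : ∀ n : ℕ, m (Metric.closedBall x₀ (n + 1)) < ⊤ := fun n =>
    hm _ Metric.isBounded_closedBall measurableSet_closedBall
  have hM1 : ∀ n, 1 ≤ M n := fun n => le_max_left _ _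
  have hMpos : ∀ n, 0 < M n := fun n => lt_of_lt_of_le one_pos (hM1 n)
  have hMmono : Monotone M := by
    intro i j hij
    refine max_le_max le_rfl (ENNReal.toReal_mono (hMfin j).ne
      (measure_mono (Metric.closedBall_subset_closedBall ?_)))
    have : (i : ℝ) ≤ j := Nat.cast_le.mpr hij
    linarith
  set c : ℕ → ℝ := fun n => Real.sqrt ((1/2) ^ (n+1) / M n) with hc
  have hcpos : ∀ n, 0 < c n := fun n =>
    Real.sqrt_pos.mpr (div_pos (by positivity) (hMpos n))
  have hcsq : ∀ n, c n ^ 2 = (1/2) ^ (n+1) / M n := by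
    intro n
    rw [hc]
    exact Real.sq_sqrt (by positivity)
  have hcle1 : ∀ n, c n ≤ 1 := by
    intro n
    have hd : (1/2:ℝ)^(n+1) / M n ≤ 1 := by
      rw [div_le_one (hMpos n)]
      calc (1/2:ℝ)^(n+1) ≤ 1 := by apply pow_le_one₀ <;> norm_num
        _ ≤ M n := hM1 n
    calc c n ≤ Real.sqrt 1 := Real.sqrt_le_sqrt hd
      _ = 1 := Real.sqrt_one
  have hcmono : ∀ i j : ℕ, i ≤ j → c j ≤ c i := by
    intro i j hij
    apply Real.sqrt_le_sqrt
    have h1 : (1/2:ℝ)^(j+1) ≤ (1/2)^(i+1) :=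
      pow_le_pow_of_le_one (by norm_num) (by norm_num) (by omega)
    exact div_le_div₀ (by positivity) h1 (hMpos i) (hMmono hij)
  -- the pieces
  set g : ℕ → ℝ → ℝ := fun n t => min 1 (c n + max 0 ((n : ℝ) - t)) with hg
  have hg0 : ∀ n t, 0 ≤ g n t := fun n t =>
    le_min one_pos.le (add_nonneg (hcpos n).le (le_max_left _ _))
  have hbdd : ∀ t : ℝ, BddBelow (Set.range fun n => g n t) := by
    intro t
    exact ⟨0, by rintro _ ⟨n, rfl⟩; exact hg0 n t⟩
  set f : ℝ → ℝ := fun t => ⨅ n : ℕ, g n t with hf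
  have hfle : ∀ t (n : ℕ), f t ≤ g n t := fun t n => ciInf_le (hbdd t) n
  have hfle1 : ∀ t, f t ≤ 1 := fun t => (hfle t 0).trans (min_le_left _ _)
  have hflb : ∀ t : ℝ, 0 ≤ t → c ⌈t⌉₊ ≤ f t := by
    intro t ht
    refine le_ciInf fun n => ?_
    rcases le_or_gt n ⌈t⌉₊ with h | h
    · refine le_min (hcle1 _) ?_
      calc c ⌈t⌉₊ ≤ c n := hcmono n _ h
        _ ≤ c n + max 0 ((n:ℝ) - t) := le_add_of_nonneg_right (le_max_left _ _)
    · refine le_min (hcle1 _) ?_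
      have h1 : (1:ℝ) ≤ (n:ℝ) - t := by
        have h2 : (⌈t⌉₊ : ℝ) + 1 ≤ n := by exact_mod_cast Nat.succ_le_of_lt h
        have h3 : t ≤ ⌈t⌉₊ := Nat.le_ceil t
        linarith
      calc c ⌈t⌉₊ ≤ 1 := hcle1 _
        _ ≤ max 0 ((n:ℝ) - t) := le_max_of_le_right h1
        _ ≤ c n + max 0 ((n:ℝ) - t) := le_add_of_nonneg_left (hcpos n).le
  have hflip : ∀ s t : ℝ, f s ≤ f t + |s - t| := by
    intro s t
    rw [← sub_le_iff_le_add]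
    refine le_ciInf fun n => ?_
    rw [sub_le_iff_le_add]
    calc f s ≤ g n s := hfle s n
      _ ≤ g n t + |((n:ℝ) - s) - ((n:ℝ) - t)| := aux_lip (c n) _ _
      _ = g n t + |s - t| := by rw [show ((n:ℝ) - s) - ((n:ℝ) - t) = -(s - t) by ring, abs_neg]
  refine ⟨fun x => f (dist x x₀), fun x => ⟨?_, hfle1 _⟩, ?_, ?_⟩
  · exact lt_of_lt_of_le (hcpos _) (hflb _ dist_nonneg)
  · apply LipschitzWith.of_dist_le_mul
    intro x y
    rw [NNReal.coe_one, one_mul, Real.dist_eq]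
    have hd : |dist x x₀ - dist y x₀| ≤ dist x y := abs_dist_sub_le x y x₀
    have h1 := hflip (dist x x₀) (dist y x₀)
    have h2 := hflip (dist y x₀) (dist x x₀)
    rw [abs_sub_comm] at h2
    rw [abs_le]
    constructor <;> [linarith [abs_le.mp (le_refl |dist y x₀ - dist x x₀|)]; skip]
    · linarith
  · -- the integral bound
    set A : ℕ → Set X := fun n => (fun x => dist x x₀) ⁻¹' Set.Ico (n:ℝ) (n+1) with hA
    have hAmeas : ∀ n, MeasurableSet (A n) :=
      fun n => ((continuous_id.dist continuous_const).measurable) measurableSet_Ico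
    have hcover : (⋃ n, A n) = Set.univ := by
      ext x
      simp only [Set.mem_iUnion, Set.mem_univ, iff_true, hA, Set.mem_preimage, Set.mem_Ico]
      exact ⟨⌊dist x x₀⌋₊, Nat.floor_le dist_nonneg, Nat.lt_floor_add_one _⟩
    calc ∫⁻ x, ENNReal.ofReal (f (dist x x₀) ^ 2) ∂m
        = ∫⁻ x in ⋃ n, A n, ENNReal.ofReal (f (dist x x₀) ^ 2) ∂m := by
          rw [hcover, Measure.restrict_univ]
      _ ≤ ∑' n, ∫⁻ x in A n, ENNReal.ofReal (f (dist x x₀) ^ 2) ∂m :=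
          lintegral_iUnion_le _ _
      _ ≤ ∑' n : ℕ, ENNReal.ofReal ((1/2:ℝ) ^ (n+1)) := by
          refine ENNReal.tsum_le_tsum fun n => ?_
          have hb : ∀ x ∈ A n, ENNReal.ofReal (f (dist x x₀) ^ 2)
              ≤ ENNReal.ofReal (c n ^ 2) := by
            intro x hx
            apply ENNReal.ofReal_le_ofReal
            have hxA : (n:ℝ) ≤ dist x x₀ := hx.1
            have hφ : f (dist x x₀) ≤ c n := by
              calc f (dist x x₀) ≤ g n (dist x x₀) := hfle _ n
                _ = min 1 (c n) := by
                    show min 1 (c n + max 0 ((n:ℝ) - dist x x₀)) = min 1 (c n)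
                    rw [max_eq_left (by linarith), add_zero]
                _ ≤ c n := min_le_right _ _
            have h0 : 0 ≤ f (dist x x₀) :=
              le_ciInf fun k => hg0 k _
            exact pow_le_pow_left₀ h0 hφ 2
          calc ∫⁻ x in A n, ENNReal.ofReal (f (dist x x₀) ^ 2) ∂m
              ≤ ∫⁻ _ in A n, ENNReal.ofReal (c n ^ 2) ∂m :=
                lintegral_mono_ae ((ae_restrict_iff' (hAmeas n)).mpr (ae_of_all _ hb))
            _ = ENNReal.ofReal (c n ^ 2) * m (A n) := by
                rw [lintegral_const, Measure.restrict_apply_univ]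
            _ ≤ ENNReal.ofReal (c n ^ 2) * m (Metric.closedBall x₀ (n+1)) := by
                apply mul_le_mul_right
                apply measure_mono
                intro x hx
                exact Metric.mem_closedBall.mpr (le_of_lt (by exact_mod_cast hx.2))
            _ ≤ ENNReal.ofReal (c n ^ 2) * ENNReal.ofReal (M n) := by
                apply mul_le_mul_right
                rw [← ENNReal.ofReal_toReal (hMfin n).ne]
                exact ENNReal.ofReal_le_ofReal (le_max_right _ _)
            _ = ENNReal.ofReal (c n ^ 2 * M n) := by
                rw [ENNReal.ofReal_mul (by positivity)]
            _ = ENNReal.ofReal ((1/2:ℝ) ^ (n+1)) := by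
                rw [hcsq, div_mul_cancel₀ _ (hMpos n).ne']
      _ ≤ 1 := aux_geom
end

section
/- Let (Y, τ) be a topological space and d : Y × Y → [0, +∞] lower semicontinuous with respect to the product topology, and suppose that for every y ∈ Y and every s ∈ [0, ∞) the set {ζ ∈ Y : d(y, ζ) ≤ s} is τ-compact. Let Λ ⊆ Y be nonempty and τ-closed, let u : Y → ℝ be bounded and τ-continuous, let L > 0, and set M := sup_{Λ} u. Then for every y ∈ Y the infimum defining ū(y) := min( M, inf_{ζ ∈ Λ} ( u(ζ) + L·d(y, ζ) ) ) (computed in the extended reals) is attained: there exists ζ ∈ Λ with ū(y) = min( M, u(ζ) + L·d(y, ζ) ). -/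
/-!
If `M` does not exceed the infimum, every point of `Λ` attains it. Otherwise some `ζ₁ ∈ Λ` has
`u ζ₁ + L·d(y, ζ₁) < M ≤ C`, where `|u| ≤ C`. As `u ≥ -C` and `L > 0`, the sublevel set of
`f := u + L·d(y, ·)` at the level `C` lies in a closed `d`-ball around `y`, hence is compact,
and the lower semicontinuous `f` attains its minimum over the closed set `Λ` inside it.
-/

open scoped ENNReal
open scoped NNReal

theorem EReal.coe_mul_coe_ennreal_of_nonneg {L : ℝ} (hL : 0 ≤ L) (e : ℝ≥0∞) :
    (L : EReal) * (e : EReal) = ((ENNReal.ofReal L * e : ℝ≥0∞) : EReal) := by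
  rw [EReal.coe_ennreal_mul, EReal.coe_ennreal_ofReal, max_eq_left hL]

theorem ENNReal.le_ofReal_div_of_coe_add_mul_le {a c L : ℝ} (hL : 0 < L) {e : ℝ≥0∞}
    (h : (a : EReal) + (L : EReal) * (e : EReal) ≤ c) : e ≤ ENNReal.ofReal ((c - a) / L) := by
  have he : e ≠ ⊤ := by
    rintro rfl
    rw [EReal.coe_ennreal_top, EReal.mul_top_of_pos (by exact_mod_cast hL),
      EReal.coe_add_top] at h
    exact (EReal.coe_lt_top c).not_ge h
  lift e to ℝ≥0 using he
  rw [EReal.coe_nnreal_eq_coe_real, ← EReal.coe_mul, ← EReal.coe_add, EReal.coe_le_coe_iff] at h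
  rw [← ENNReal.ofReal_coe_nnreal]
  exact ENNReal.ofReal_le_ofReal ((le_div_iff₀ hL).2 (by linarith))

theorem Continuous.lowerSemicontinuous_coe_add_mul_coe_ennreal {Y : Type*} [TopologicalSpace Y]
    {u : Y → ℝ} (hu : Continuous u) {g : Y → ℝ≥0∞} (hg : LowerSemicontinuous g)
    {L : ℝ} (hL : 0 ≤ L) :
    LowerSemicontinuous fun ζ => (u ζ : EReal) + (L : EReal) * (g ζ : EReal) := by
  simp only [EReal.coe_mul_coe_ennreal_of_nonneg hL]
  have hLg : LowerSemicontinuous fun ζ => ENNReal.ofReal L * g ζ :=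
    (ENNReal.continuous_const_mul ENNReal.ofReal_ne_top).comp_lowerSemicontinuous hg
      fun _ _ h => mul_le_mul_right h _
  exact (continuous_coe_real_ereal.comp hu).lowerSemicontinuous.add'
    (continuous_coe_ennreal_ereal.comp_lowerSemicontinuous hLg
      fun _ _ h => EReal.coe_ennreal_le_coe_ennreal_iff.mpr h)
    fun _ => EReal.continuousAt_add (.inl (EReal.coe_ne_top _)) (.inl (EReal.coe_ne_bot _))

theorem LowerSemicontinuous.exists_isMinOn_of_isCompact_sublevel {α β : Type*}
    [TopologicalSpace α] [LinearOrder β] {f : α → β} (hf : LowerSemicontinuous f)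
    {s : Set α} (hs : IsClosed s) {x : α} (hx : x ∈ s) {c : β} (hxc : f x ≤ c)
    (hc : IsCompact {y | f y ≤ c}) : ∃ z ∈ s, IsMinOn f s z := by
  obtain ⟨z, ⟨hzs, hzc⟩, hz⟩ := LowerSemicontinuousOn.exists_isMinOn
    (⟨x, hx, hxc⟩ : (s ∩ {y | f y ≤ c}).Nonempty) (hc.inter_left hs) (hf.lowerSemicontinuousOn _)
  refine ⟨z, hzs, fun y hy => ?_⟩
  rcases le_or_gt (f y) c with hyc | hcy
  · exact hz ⟨hy, hyc⟩
  · exact hzc.trans hcy.le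

theorem isCompact_setOf_coe_add_mul_le {Y : Type*} [TopologicalSpace Y] {u : Y → ℝ}
    {g : Y → ℝ≥0∞} {C L : ℝ} (huC : ∀ ζ, -C ≤ u ζ) (hL : 0 < L)
    (hf : LowerSemicontinuous fun ζ => (u ζ : EReal) + (L : EReal) * (g ζ : EReal))
    (hg : ∀ s : ℝ≥0∞, s ≠ ⊤ → IsCompact {ζ | g ζ ≤ s}) (c : ℝ) :
    IsCompact {ζ | (u ζ : EReal) + (L : EReal) * (g ζ : EReal) ≤ c} :=
  (hg (ENNReal.ofReal ((c + C) / L)) ENNReal.ofReal_ne_top).of_isClosed_subset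
    (hf.isClosed_preimage c) fun ζ hζ =>
    (ENNReal.le_ofReal_div_of_coe_add_mul_le hL hζ).trans <|
      ENNReal.ofReal_le_ofReal <| div_le_div_of_nonneg_right (by linarith [huC ζ]) hL.le

/-- **Attainment of the infimum in the constrained McShane extension along a lower
semicontinuous extended distance with compact sublevel sets.**  For `Λ` nonempty closed,
`u` bounded continuous, `L > 0`, and `M := sup_Λ u`, the extended-real infimum defining
`ū(y) = min(M, inf_{ζ ∈ Λ} (u ζ + L·d(y, ζ)))` is attained at some `ζ ∈ Λ`. -/
theorem mcshane_infimum_attained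
    {Y : Type*} [TopologicalSpace Y]
    (d : Y → Y → ℝ≥0∞)
    (hd : LowerSemicontinuous fun p : Y × Y => d p.1 p.2)
    (hcomp : ∀ y : Y, ∀ s : ℝ≥0∞, s ≠ ⊤ → IsCompact {ζ | d y ζ ≤ s})
    (Λ : Set Y) (hΛne : Λ.Nonempty) (hΛcl : IsClosed Λ)
    (u : Y → ℝ) (hu : Continuous u) (hub : ∃ C : ℝ, ∀ y, |u y| ≤ C)
    (L : ℝ) (hL : 0 < L) :
    ∀ y : Y, ∃ ζ ∈ Λ,
      min (⨆ ξ ∈ Λ, (u ξ : EReal))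
          (⨅ ξ ∈ Λ, ((u ξ : EReal) + (L : EReal) * ((d y ξ : ℝ≥0∞) : EReal))) =
        min (⨆ ξ ∈ Λ, (u ξ : EReal))
          ((u ζ : EReal) + (L : EReal) * ((d y ζ : ℝ≥0∞) : EReal)) := by
  intro y
  obtain ⟨C, hC⟩ := hub
  set f : Y → EReal := fun ζ => (u ζ : EReal) + (L : EReal) * ((d y ζ : ℝ≥0∞) : EReal)
  set M : EReal := ⨆ ξ ∈ Λ, (u ξ : EReal)
  rcases le_or_gt M (⨅ ξ ∈ Λ, f ξ) with hMI | hIM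
  · obtain ⟨ζ, hζ⟩ := hΛne
    exact ⟨ζ, hζ, by rw [min_eq_left hMI, min_eq_left (hMI.trans (iInf₂_le ζ hζ))]⟩
  obtain ⟨ζ₁, hζ₁, hfζ₁⟩ : ∃ ζ ∈ Λ, f ζ < M := by simpa only [iInf_lt_iff, exists_prop] using hIM
  have hMC : M ≤ C := iSup₂_le fun ξ _ => by exact_mod_cast (le_abs_self _).trans (hC ξ)
  have hf : LowerSemicontinuous f :=
    hu.lowerSemicontinuous_coe_add_mul_coe_ennreal (hd.comp (Continuous.prodMk_right y)) hL.le
  obtain ⟨ζ₀, hζ₀, hmin⟩ := hf.exists_isMinOn_of_isCompact_sublevel hΛcl hζ₁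
    (hfζ₁.le.trans hMC) (isCompact_setOf_coe_add_mul_le (fun ζ => neg_le_of_abs_le (hC ζ)) hL hf
      (hcomp y) C)
  have hI : ⨅ ξ ∈ Λ, f ξ = f ζ₀ := le_antisymm (iInf₂_le ζ₀ hζ₀) (le_iInf₂ fun ξ hξ => hmin hξ)
  exact ⟨ζ₀, hζ₀, by rw [hI]⟩
end

section
/- Let ν be a probability measure on a measurable space Z, let (κ_z)_{z∈Z} be a Markov kernel from Z to a measurable space X (each κ_z is a probability measure on X, measurably in z), and let μ be the mixture measure defined by μ(A) := ∫_Z κ_z(A) dν(z) for measurable A ⊆ X. Then for every measurable g : X → [0, +∞], the essential supremum of g with respect to μ equals the ν-essential supremum of the function z ↦ (essential supremum of g with respect to κ_z). -/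
open MeasureTheory
open scoped ENNReal

/-- **Essential suprema under mixtures.**  If `μ = ∫ κ_z dν(z)` is the mixture of a
measurable family of probability measures `(κ_z)` by a probability measure `ν`, then for
every measurable `g : X → [0, ∞]` the `μ`-essential supremum of `g` equals the
`ν`-essential supremum of `z ↦ essSup_{κ_z} g`. -/
theorem essSup_mixture
    {Z X : Type*} [MeasurableSpace Z] [MeasurableSpace X]
    (ν : Measure Z) [IsProbabilityMeasure ν]
    (κ : Z → Measure X)
    (hκprob : ∀ z, IsProbabilityMeasure (κ z))
    (hκmeas : ∀ B : Set X, MeasurableSet B → Measurable fun z => κ z B)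
    (μ : Measure X)
    (hμ : ∀ A : Set X, MeasurableSet A → μ A = ∫⁻ z, κ z A ∂ν)
    (g : X → ℝ≥0∞) (hg : Measurable g) :
    essSup g μ = essSup (fun z => essSup g (κ z)) ν := by
  apply le_antisymm
  · set c := essSup (fun z => essSup g (κ z)) ν with hc
    have hS : MeasurableSet {x | c < g x} := measurableSet_lt measurable_const hg
    have hzero : μ {x | c < g x} = 0 := by
      rw [hμ _ hS]
      rw [lintegral_eq_zero_iff (hκmeas _ hS)]
      filter_upwards [ae_le_essSup (f := fun z => essSup g (κ z))] with z hz
      have : ∀ᵐ x ∂(κ z), g x ≤ c := (ae_le_essSup (f := g)).mono fun x hx => hx.trans hz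
      simpa [not_le] using (ae_iff.mp this)
    exact essSup_le_of_ae_le c (ae_iff.mpr (by simpa [not_le] using hzero))
  · set c := essSup g μ with hc
    have hS : MeasurableSet {x | c < g x} := measurableSet_lt measurable_const hg
    have hzero : μ {x | c < g x} = 0 := by
      have : ∀ᵐ x ∂μ, g x ≤ c := ae_le_essSup (f := g)
      simpa [not_le] using (ae_iff.mp this)
    rw [hμ _ hS, lintegral_eq_zero_iff (hκmeas _ hS)] at hzero
    refine essSup_le_of_ae_le c ?_
    filter_upwards [hzero] with z hz
    exact essSup_le_of_ae_le c (ae_iff.mpr (by simpa [not_le] using hz))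
end
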